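/- arXiv:2105.14168 — 8 statements merged into one kernel-verified Lean document; each statement's English description precedes it below -/
import Mathlib

section
/- (Lemma 2.5 of the paper.) Let Γ be a countable type with a graph distance 𝐝 : Γ → Γ → ℕ and constants κ > 0, d ≥ 1 such that every sphere {y : 𝐝(x,y) = r} has at most κ·(1+r)^{d−1} elements. Let Z ⊆ Γ be finite and nonempty, let E be a Banach space, let b > 0, 0 < p < 1, M ≥ 0, and let Φ be a map from finite subsets of Γ to E with Φ(∅) = 0 such that for every x ∈ Γ the family (‖Φ(X)‖·exp(b·D_Z(X)^p))_{X ∋ x, X nonempty finite} is summable with sum at most M. Then the family (Φ(X)), indexed by all nonempty finite subsets X of Γ, is summable in E, and its sum G^Φ satisfies ‖G^Φ‖ ≤ C·M·|Z| with C = κ·∑_{n=0}^∞ (1+n)^{d−1}·exp(−b·n^p). -/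
set_option maxHeartbeats 1000000 in
lemma summable_pow_mul_exp_neg_rpow (b p : ℝ) (hb : 0 < b) (hp0 : 0 < p) (d : ℕ) :
    Summable (fun n : ℕ => (1 + (n : ℝ)) ^ d * Real.exp (-b * (n : ℝ) ^ p)) := by
  set k : ℕ := ⌈((d : ℝ) + 2) / p⌉₊ with hk
  have hkp : (d : ℝ) + 2 ≤ p * k := by
    have h1 : ((d : ℝ) + 2) / p ≤ k := Nat.le_ceil _
    calc (d : ℝ) + 2 = (((d : ℝ) + 2) / p) * p := by field_simp
    _ ≤ (k : ℝ) * p := mul_le_mul_of_nonneg_right h1 hp0.le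
    _ = p * k := mul_comm _ _
  set C0 : ℝ := 2 ^ d * (Nat.factorial k : ℝ) / b ^ k with hC0
  have hC0pos : 0 < C0 := by positivity
  rw [← summable_nat_add_iff 1]
  have hbound : ∀ n : ℕ,
      (1 + ((n + 1 : ℕ) : ℝ)) ^ d * Real.exp (-b * ((n + 1 : ℕ) : ℝ) ^ p)
        ≤ C0 * (((n + 1 : ℕ) : ℝ)) ^ (-(2 : ℝ)) := by
    intro n
    set x : ℝ := ((n + 1 : ℕ) : ℝ) with hxdef
    have hx1 : (1 : ℝ) ≤ x := by
      rw [hxdef]; exact_mod_cast Nat.succ_le_succ (Nat.zero_le n)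
    have hx0 : (0 : ℝ) < x := lt_of_lt_of_le one_pos hx1
    have hxp : (0 : ℝ) < x ^ p := Real.rpow_pos_of_pos hx0 p
    have hexp : Real.exp (-b * x ^ p) ≤ (Nat.factorial k : ℝ) / (b ^ k * x ^ (p * k)) := by
      have h1 : (b * x ^ p) ^ k / (Nat.factorial k : ℝ) ≤ Real.exp (b * x ^ p) :=
        Real.pow_div_factorial_le_exp _ (by positivity) k
      have h2 : (b * x ^ p) ^ k = b ^ k * x ^ (p * k) := by
        rw [mul_pow, ← Real.rpow_natCast (x ^ p) k, ← Real.rpow_mul hx0.le]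
      rw [h2] at h1
      have hpos : (0 : ℝ) < b ^ k * x ^ (p * k) := by positivity
      rw [neg_mul, Real.exp_neg]
      calc (Real.exp (b * x ^ p))⁻¹
          ≤ (b ^ k * x ^ (p * k) / (Nat.factorial k : ℝ))⁻¹ := by
            apply inv_anti₀ (by positivity) h1
      _ = (Nat.factorial k : ℝ) / (b ^ k * x ^ (p * k)) := inv_div _ _
    calc (1 + x) ^ d * Real.exp (-b * x ^ p)
        ≤ (2 * x) ^ d * ((Nat.factorial k : ℝ) / (b ^ k * x ^ (p * k))) := by
          apply mul_le_mul _ hexp (Real.exp_pos _).le (by positivity)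
          apply pow_le_pow_left₀ (by positivity)
          linarith
    _ = C0 * (x ^ (d : ℝ) / x ^ (p * (k : ℝ))) := by
        rw [hC0, mul_pow, Real.rpow_natCast]
        field_simp
    _ = C0 * x ^ ((d : ℝ) - p * k) := by rw [Real.rpow_sub hx0]
    _ ≤ C0 * x ^ (-(2 : ℝ)) := by
        apply mul_le_mul_of_nonneg_left _ hC0pos.le
        apply Real.rpow_le_rpow_of_exponent_le hx1
        linarith
  apply Summable.of_nonneg_of_le (fun n => by positivity) hbound
  apply Summable.mul_left
  exact (summable_nat_add_iff 1).mpr (Real.summable_nat_rpow.mpr (by norm_num : (-2:ℝ) < -1))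

/-- The diameter `D(X) = max {𝐝(x,y) : x, y ∈ X}` of a finite subset of `Γ`. -/
def finsetDiam {Γ : Type*} (dist : Γ → Γ → ℕ) (X : Finset Γ) : ℕ :=
  X.sup fun x => X.sup fun y => dist x y

/-- The distance `𝐝(X,Z) = min {𝐝(x,z) : x ∈ X, z ∈ Z}` from a finite set `X` to a set `Z`. -/
noncomputable def finsetDistToSet {Γ : Type*} (dist : Γ → Γ → ℕ) (X : Finset Γ) (Z : Set Γ) : ℕ :=
  sInf {n : ℕ | ∃ x ∈ X, ∃ z ∈ Z, dist x z = n}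

/-- `D_Z(X) = D(X) + 𝐝(X,Z)`. -/
noncomputable def DZ {Γ : Type*} (dist : Γ → Γ → ℕ) (Z : Set Γ) (X : Finset Γ) : ℕ :=
  finsetDiam dist X + finsetDistToSet dist X Z

lemma exists_min_pair {Γ : Type*} (dist : Γ → Γ → ℕ) (X Z : Finset Γ)
    (hX : X.Nonempty) (hZ : Z.Nonempty) :
    ∃ x, x ∈ X ∧ ∃ z, z ∈ Z ∧ dist x z = finsetDistToSet dist X (↑Z) := by
  obtain ⟨x0, hx0⟩ := hX
  obtain ⟨z0, hz0⟩ := hZ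
  have hne : {n : ℕ | ∃ x ∈ X, ∃ z ∈ (↑Z : Set Γ), dist x z = n}.Nonempty :=
    ⟨dist x0 z0, x0, hx0, z0, by simpa using hz0, rfl⟩
  have hmem := Nat.sInf_mem hne
  obtain ⟨x, hx, z, hz, h⟩ := hmem
  exact ⟨x, hx, z, by simpa using hz, h⟩

/-- Bound on sums of `exp(-b d(a,z)^p)` over any finite set, via the sphere bound. -/
lemma sum_exp_le {Γ : Type*} (dist : Γ → Γ → ℕ)
    (hsymm : ∀ x y : Γ, dist x y = dist y x)
    (κ : ℝ) (hκ : 0 < κ) (d : ℕ)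
    (hsphere : ∀ (x : Γ) (r : ℕ), {y : Γ | dist x y = r}.Finite ∧
      ({y : Γ | dist x y = r}.ncard : ℝ) ≤ κ * (1 + (r : ℝ)) ^ (d - 1))
    (b p : ℝ) (hb : 0 < b) (hp0 : 0 < p)
    (z : Γ) (A : Finset Γ) :
    ∑ a ∈ A, Real.exp (-b * (dist a z : ℝ) ^ p)
      ≤ κ * ∑' n : ℕ, (1 + (n : ℝ)) ^ (d - 1) * Real.exp (-b * (n : ℝ) ^ p) := by
  have hCsum := summable_pow_mul_exp_neg_rpow b p hb hp0 (d - 1)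
  have hfib := Finset.sum_fiberwise_of_maps_to
    (g := fun a : Γ => dist a z) (t := A.image (fun a => dist a z))
    (fun a ha => Finset.mem_image_of_mem _ ha)
    (fun a => Real.exp (-b * (dist a z : ℝ) ^ p))
  rw [← hfib]
  have hstep : ∀ r ∈ A.image (fun a => dist a z),
      ∑ a ∈ A.filter (fun a => dist a z = r), Real.exp (-b * (dist a z : ℝ) ^ p)
        ≤ κ * ((1 + (r : ℝ)) ^ (d - 1) * Real.exp (-b * (r : ℝ) ^ p)) := by
    intro r _
    have h1 : ∑ a ∈ A.filter (fun a => dist a z = r), Real.exp (-b * (dist a z : ℝ) ^ p)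
        = (A.filter (fun a => dist a z = r)).card * Real.exp (-b * (r : ℝ) ^ p) := by
      rw [Finset.sum_congr rfl (fun a ha => by
        rw [(Finset.mem_filter.mp ha).2]), Finset.sum_const, nsmul_eq_mul]
    rw [h1]
    have hcard : ((A.filter (fun a => dist a z = r)).card : ℝ) ≤ κ * (1 + (r : ℝ)) ^ (d - 1) := by
      have hsub : (↑(A.filter (fun a => dist a z = r)) : Set Γ) ⊆ {y : Γ | dist z y = r} := by
        intro a ha
        simp only [Finset.coe_filter, Set.mem_setOf_eq] at ha ⊢
        rw [hsymm]; exact ha.2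
      have := Set.ncard_le_ncard hsub (hsphere z r).1
      rw [Set.ncard_coe_finset] at this
      calc ((A.filter (fun a => dist a z = r)).card : ℝ)
          ≤ ({y : Γ | dist z y = r}.ncard : ℝ) := by exact_mod_cast this
      _ ≤ κ * (1 + (r : ℝ)) ^ (d - 1) := (hsphere z r).2
    calc ((A.filter (fun a => dist a z = r)).card : ℝ) * Real.exp (-b * (r : ℝ) ^ p)
        ≤ (κ * (1 + (r : ℝ)) ^ (d - 1)) * Real.exp (-b * (r : ℝ) ^ p) :=
          mul_le_mul_of_nonneg_right hcard (Real.exp_pos _).le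
    _ = κ * ((1 + (r : ℝ)) ^ (d - 1) * Real.exp (-b * (r : ℝ) ^ p)) := by ring
  calc ∑ r ∈ A.image (fun a => dist a z),
        ∑ a ∈ A.filter (fun a => dist a z = r), Real.exp (-b * (dist a z : ℝ) ^ p)
      ≤ ∑ r ∈ A.image (fun a => dist a z),
          κ * ((1 + (r : ℝ)) ^ (d - 1) * Real.exp (-b * (r : ℝ) ^ p)) :=
        Finset.sum_le_sum hstep
  _ = κ * ∑ r ∈ A.image (fun a => dist a z),
        (1 + (r : ℝ)) ^ (d - 1) * Real.exp (-b * (r : ℝ) ^ p) := by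
      rw [Finset.mul_sum]
  _ ≤ κ * ∑' n : ℕ, (1 + (n : ℝ)) ^ (d - 1) * Real.exp (-b * (n : ℝ) ^ p) := by
      apply mul_le_mul_of_nonneg_left _ hκ.le
      exact Summable.sum_le_tsum _ (fun n _ => by positivity) hCsum

/-- Lemma 2.5 of the paper: if `Z` is a finite nonempty set and `|||Φ|||_{b,Z} ≤ M`, then
`G^Φ = ∑_X Φ(X)` converges in `E` and `‖G^Φ‖ ≤ C M |Z|` with
`C = κ ∑_{n} (1+n)^(d-1) exp (-b n^p)`. -/
theorem almost_local_observable_norm {Γ : Type*} [Countable Γ] (dist : Γ → Γ → ℕ)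
    (hdist0 : ∀ x y : Γ, dist x y = 0 ↔ x = y)
    (hsymm : ∀ x y : Γ, dist x y = dist y x)
    (htri : ∀ x y z : Γ, dist x z ≤ dist x y + dist y z)
    (κ : ℝ) (hκ : 0 < κ) (d : ℕ) (hd : 1 ≤ d)
    (hsphere : ∀ (x : Γ) (r : ℕ), {y : Γ | dist x y = r}.Finite ∧
      ({y : Γ | dist x y = r}.ncard : ℝ) ≤ κ * (1 + (r : ℝ)) ^ (d - 1))
    (Z : Finset Γ) (hZ : Z.Nonempty)
    {E : Type*} [NormedAddCommGroup E] [NormedSpace ℝ E] [CompleteSpace E]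
    (b p M : ℝ) (hb : 0 < b) (hp0 : 0 < p) (hp1 : p < 1) (hM : 0 ≤ M)
    (Φ : Finset Γ → E) (hΦempty : Φ ∅ = 0)
    (hΦ : ∀ x : Γ,
      Summable (fun X : {X : Finset Γ // x ∈ X} =>
        ‖Φ X.1‖ * Real.exp (b * (DZ dist (↑Z) X.1 : ℝ) ^ p)) ∧
      ∑' X : {X : Finset Γ // x ∈ X},
        ‖Φ X.1‖ * Real.exp (b * (DZ dist (↑Z) X.1 : ℝ) ^ p) ≤ M) :
    Summable (fun X : {X : Finset Γ // X.Nonempty} => Φ X.1) ∧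
    ‖∑' X : {X : Finset Γ // X.Nonempty}, Φ X.1‖ ≤
      (κ * ∑' n : ℕ, (1 + (n : ℝ)) ^ (d - 1) * Real.exp (-b * (n : ℝ) ^ p)) * M * Z.card := by
  classical
  set C : ℝ := ∑' n : ℕ, (1 + (n : ℝ)) ^ (d - 1) * Real.exp (-b * (n : ℝ) ^ p) with hCdef
  have hCnn : 0 ≤ C := tsum_nonneg (fun n => by positivity)
  -- choose minimizing pairs
  have hchoice : ∀ X : {X : Finset Γ // X.Nonempty},
      ∃ x, x ∈ X.1 ∧ ∃ z, z ∈ Z ∧ dist x z = finsetDistToSet dist X.1 (↑Z) :=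
    fun X => exists_min_pair dist X.1 Z X.2 hZ
  choose xc hxc zc hzc hdc using hchoice
  set c : {X : Finset Γ // X.Nonempty} → Γ × Γ := fun X => (xc X, zc X) with hcdef
  -- key finite bound
  have key : ∀ T : Finset {X : Finset Γ // X.Nonempty},
      ∑ X ∈ T, ‖Φ X.1‖ ≤ (κ * C) * M * Z.card := by
    intro T
    have hfib := Finset.sum_fiberwise_of_maps_to
      (g := c) (t := T.image c) (fun X hX => Finset.mem_image_of_mem _ hX)
      (fun X => ‖Φ X.1‖)
    rw [← hfib]
    -- bound each fiber
    have hfiber : ∀ q ∈ T.image c,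
        ∑ X ∈ T.filter (fun X => c X = q), ‖Φ X.1‖
          ≤ Real.exp (-b * (dist q.1 q.2 : ℝ) ^ p) * M := by
      intro q hq
      set x := q.1 with hx
      set F := T.filter (fun X => c X = q) with hF
      have hmemx : ∀ X ∈ F, x ∈ X.1 := by
        intro X hX
        have h := (Finset.mem_filter.mp hX).2
        have : xc X = x := congrArg Prod.fst h
        rw [← this]; exact hxc X
      have hdze : ∀ X ∈ F, (dist q.1 q.2 : ℝ) ≤ (DZ dist (↑Z) X.1 : ℝ) := by
        intro X hX
        have h := (Finset.mem_filter.mp hX).2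
        have h1 : xc X = q.1 := congrArg Prod.fst h
        have h2 : zc X = q.2 := congrArg Prod.snd h
        have h3 : dist q.1 q.2 = finsetDistToSet dist X.1 (↑Z) := by
          rw [← h1, ← h2]; exact hdc X
        have h4 : finsetDistToSet dist X.1 (↑Z) ≤ DZ dist (↑Z) X.1 := Nat.le_add_left _ _
        exact_mod_cast h3 ▸ h4
      have hterm : ∀ X ∈ F, ‖Φ X.1‖ ≤ Real.exp (-b * (dist q.1 q.2 : ℝ) ^ p) *
          (‖Φ X.1‖ * Real.exp (b * (DZ dist (↑Z) X.1 : ℝ) ^ p)) := by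
        intro X hX
        have heq : ‖Φ X.1‖ = Real.exp (-b * (DZ dist (↑Z) X.1 : ℝ) ^ p) *
            (‖Φ X.1‖ * Real.exp (b * (DZ dist (↑Z) X.1 : ℝ) ^ p)) := by
          rw [neg_mul, Real.exp_neg]
          field_simp
        have hle : Real.exp (-b * (DZ dist (↑Z) X.1 : ℝ) ^ p)
            ≤ Real.exp (-b * (dist q.1 q.2 : ℝ) ^ p) := by
          apply Real.exp_le_exp.mpr
          rw [neg_mul, neg_mul, neg_le_neg_iff]
          apply mul_le_mul_of_nonneg_left _ hb.le
          exact Real.rpow_le_rpow (by positivity) (hdze X hX) hp0.le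
        calc ‖Φ X.1‖ = Real.exp (-b * (DZ dist (↑Z) X.1 : ℝ) ^ p) *
            (‖Φ X.1‖ * Real.exp (b * (DZ dist (↑Z) X.1 : ℝ) ^ p)) := heq
        _ ≤ Real.exp (-b * (dist q.1 q.2 : ℝ) ^ p) *
            (‖Φ X.1‖ * Real.exp (b * (DZ dist (↑Z) X.1 : ℝ) ^ p)) :=
          mul_le_mul_of_nonneg_right hle (by positivity)
      calc ∑ X ∈ F, ‖Φ X.1‖
          ≤ ∑ X ∈ F, Real.exp (-b * (dist q.1 q.2 : ℝ) ^ p) *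
              (‖Φ X.1‖ * Real.exp (b * (DZ dist (↑Z) X.1 : ℝ) ^ p)) :=
            Finset.sum_le_sum hterm
      _ = Real.exp (-b * (dist q.1 q.2 : ℝ) ^ p) *
            ∑ X ∈ F, ‖Φ X.1‖ * Real.exp (b * (DZ dist (↑Z) X.1 : ℝ) ^ p) := by
          rw [Finset.mul_sum]
      _ ≤ Real.exp (-b * (dist q.1 q.2 : ℝ) ^ p) * M := by
          apply mul_le_mul_of_nonneg_left _ (Real.exp_pos _).le
          -- inject the fiber into {Y // x ∈ Y}
          set G : Finset {Y : Finset Γ // x ∈ Y} :=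
            F.attach.image (fun W => (⟨W.1.1, hmemx W.1 W.2⟩ : {Y : Finset Γ // x ∈ Y})) with hG
          have hinj : ∀ W ∈ F.attach, ∀ W' ∈ F.attach,
              (⟨W.1.1, hmemx W.1 W.2⟩ : {Y : Finset Γ // x ∈ Y}) =
              (⟨W'.1.1, hmemx W'.1 W'.2⟩ : {Y : Finset Γ // x ∈ Y}) → W = W' := by
            intro W _ W' _ h
            have : W.1.1 = W'.1.1 := congrArg (fun Y : {Y : Finset Γ // x ∈ Y} => Y.1) h
            exact Subtype.ext (Subtype.ext this)
          have hsumeq : ∑ Y ∈ G, ‖Φ Y.1‖ * Real.exp (b * (DZ dist (↑Z) Y.1 : ℝ) ^ p)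
              = ∑ X ∈ F, ‖Φ X.1‖ * Real.exp (b * (DZ dist (↑Z) X.1 : ℝ) ^ p) := by
            rw [hG, Finset.sum_image hinj]
            exact Finset.sum_attach F (fun X => ‖Φ X.1‖ * Real.exp (b * (DZ dist (↑Z) X.1 : ℝ) ^ p))
          rw [← hsumeq]
          calc ∑ Y ∈ G, ‖Φ Y.1‖ * Real.exp (b * (DZ dist (↑Z) Y.1 : ℝ) ^ p)
              ≤ ∑' Y : {Y : Finset Γ // x ∈ Y},
                  ‖Φ Y.1‖ * Real.exp (b * (DZ dist (↑Z) Y.1 : ℝ) ^ p) :=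
                Summable.sum_le_tsum G (fun Y _ => by positivity) (hΦ x).1
          _ ≤ M := (hΦ x).2
    calc ∑ q ∈ T.image c, ∑ X ∈ T.filter (fun X => c X = q), ‖Φ X.1‖
        ≤ ∑ q ∈ T.image c, Real.exp (-b * (dist q.1 q.2 : ℝ) ^ p) * M :=
          Finset.sum_le_sum hfiber
    _ = (∑ q ∈ T.image c, Real.exp (-b * (dist q.1 q.2 : ℝ) ^ p)) * M := by
        rw [Finset.sum_mul]
    _ ≤ ((Z.card : ℝ) * (κ * C)) * M := by
        apply mul_le_mul_of_nonneg_right _ hM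
        have hmaps : ∀ q ∈ T.image c, q.2 ∈ Z := by
          intro q hq
          obtain ⟨X, _, rfl⟩ := Finset.mem_image.mp hq
          exact hzc X
        have hfib2 := Finset.sum_fiberwise_of_maps_to
          (g := fun q : Γ × Γ => q.2) (t := Z) hmaps
          (fun q => Real.exp (-b * (dist q.1 q.2 : ℝ) ^ p))
        rw [← hfib2]
        have hz : ∀ z ∈ Z, ∑ q ∈ (T.image c).filter (fun q => q.2 = z),
            Real.exp (-b * (dist q.1 q.2 : ℝ) ^ p) ≤ κ * C := by
          intro z _
          set P := (T.image c).filter (fun q => q.2 = z) with hP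
          have h1 : ∑ q ∈ P, Real.exp (-b * (dist q.1 q.2 : ℝ) ^ p)
              = ∑ q ∈ P, Real.exp (-b * (dist q.1 z : ℝ) ^ p) := by
            apply Finset.sum_congr rfl
            intro q hq
            rw [(Finset.mem_filter.mp hq).2]
          have hinj : ∀ q ∈ P, ∀ q' ∈ P, q.1 = q'.1 → q = q' := by
            intro q hq q' hq' h
            have h2 : q.2 = z := (Finset.mem_filter.mp hq).2
            have h2' : q'.2 = z := (Finset.mem_filter.mp hq').2
            exact Prod.ext h (h2.trans h2'.symm)
          have h2 : ∑ a ∈ P.image Prod.fst, Real.exp (-b * (dist a z : ℝ) ^ p)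
              = ∑ q ∈ P, Real.exp (-b * (dist q.1 z : ℝ) ^ p) :=
            Finset.sum_image hinj
          rw [h1, ← h2]
          exact sum_exp_le dist hsymm κ hκ d hsphere b p hb hp0 z _
        calc ∑ z ∈ Z, ∑ q ∈ (T.image c).filter (fun q => q.2 = z),
              Real.exp (-b * (dist q.1 q.2 : ℝ) ^ p)
            ≤ ∑ _z ∈ Z, κ * C := Finset.sum_le_sum hz
        _ = (Z.card : ℝ) * (κ * C) := by rw [Finset.sum_const, nsmul_eq_mul]
    _ = (κ * C) * M * Z.card := by ring
  have hnn : ∀ X : {X : Finset Γ // X.Nonempty}, 0 ≤ ‖Φ X.1‖ := fun X => norm_nonneg _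
  have hsum : Summable (fun X : {X : Finset Γ // X.Nonempty} => ‖Φ X.1‖) :=
    summable_of_sum_le hnn key
  refine ⟨hsum.of_norm, ?_⟩
  calc ‖∑' X : {X : Finset Γ // X.Nonempty}, Φ X.1‖
      ≤ ∑' X : {X : Finset Γ // X.Nonempty}, ‖Φ X.1‖ := norm_tsum_le_tsum_norm hsum
  _ ≤ (κ * C) * M * Z.card := Summable.tsum_le_of_sum_le hsum key
end

section
/- Let Γ be a countable type with a graph distance 𝐝 : Γ → Γ → ℕ satisfying the metric axioms, let A be a complete normed ring, let b > 0, 0 < p < 1 and N ≥ 0. Let Φ be a map from finite subsets of Γ to A with Φ(∅) = 0 such that for every x ∈ Γ the family (‖Φ(X)‖·exp(b·D(X)^p))_{X ∋ x, X nonempty finite} is summable with sum at most N. Let O ∈ A and let Z ⊆ Γ be finite and nonempty, and assume the commutator [Φ(X), O] = Φ(X)·O − O·Φ(X) vanishes whenever X ∩ Z = ∅. Then the family ([Φ(X), O]), indexed by all nonempty finite subsets X of Γ, is summable in A and ‖∑_X [Φ(X), O]‖ ≤ 2·‖O‖·|Z|·N. -/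
/-!
Since `exp (b D(X)^p) ≥ 1`, the interactions containing a fixed site have total norm at most `N`.
The commutator `[Φ(X), O]` vanishes unless `X` meets `Z`, so its norm is dominated by
`∑_{z ∈ Z} 2 ‖O‖ ‖Φ(X)‖ 1[z ∈ X]`, a finite sum of summable families of total mass `2 ‖O‖ N` each.
-/

open Finset

section LocalSums

variable {ι κ E : Type*} [NormedAddCommGroup E]

theorem summable_and_tsum_le_of_one_le_weight {a w : ι → ℝ} (ha : 0 ≤ a) (hw : 1 ≤ w)
    (h : Summable fun i => a i * w i) : Summable a ∧ ∑' i, a i ≤ ∑' i, a i * w i := by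
  have hle : ∀ i, a i ≤ a i * w i := fun i => le_mul_of_one_le_right (ha i) (hw i)
  have hsum : Summable a := h.of_nonneg_of_le ha hle
  exact ⟨hsum, hsum.tsum_le_tsum hle h⟩

variable [CompleteSpace E]

theorem summable_and_norm_tsum_le_of_norm_le_sum {f : ι → E} {g : κ → ι → ℝ} (Z : Finset κ)
    (hg : ∀ z ∈ Z, Summable (g z)) (hfg : ∀ i, ‖f i‖ ≤ ∑ z ∈ Z, g z i) :
    Summable f ∧ ‖∑' i, f i‖ ≤ ∑ z ∈ Z, ∑' i, g z i := by
  have hG : HasSum (fun i => ∑ z ∈ Z, g z i) (∑ z ∈ Z, ∑' i, g z i) :=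
    hasSum_sum fun z hz => (hg z hz).hasSum
  exact ⟨.of_norm_bounded hG.summable hfg, tsum_of_norm_bounded hG hfg⟩

theorem summable_and_norm_tsum_le_of_support_subset_biUnion {f : ι → E} {a : ι → ℝ}
    (s : κ → Set ι) (Z : Finset κ) {M : ℝ} (ha : 0 ≤ a) (hfa : ∀ i, ‖f i‖ ≤ a i)
    (hsupp : Function.support f ⊆ ⋃ z ∈ Z, s z)
    (hs : ∀ z ∈ Z, Summable (fun i : s z => a i) ∧ ∑' i : s z, a i ≤ M) :
    Summable f ∧ ‖∑' i, f i‖ ≤ #Z * M := by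
  have hind : ∀ z i, 0 ≤ (s z).indicator a i := fun z i =>
    Set.indicator_nonneg (fun i _ => ha i) i
  have hbound : ∀ i, ‖f i‖ ≤ ∑ z ∈ Z, (s z).indicator a i := by
    intro i
    by_cases hi : i ∈ Function.support f
    · obtain ⟨z, hz, hiz⟩ := Set.mem_iUnion₂.1 (hsupp hi)
      calc ‖f i‖ ≤ (s z).indicator a i := by rw [Set.indicator_of_mem hiz]; exact hfa i
        _ ≤ ∑ z ∈ Z, (s z).indicator a i := single_le_sum (fun z _ => hind z i) hz
    · rw [Function.notMem_support.1 hi, norm_zero]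
      exact sum_nonneg fun z _ => hind z i
  obtain ⟨hsum, hnorm⟩ := summable_and_norm_tsum_le_of_norm_le_sum Z
    (fun z hz => summable_subtype_iff_indicator.1 (hs z hz).1) hbound
  refine ⟨hsum, hnorm.trans ?_⟩
  calc ∑ z ∈ Z, ∑' i, (s z).indicator a i = ∑ z ∈ Z, ∑' i : s z, a i := by
        simp only [_root_.tsum_subtype]
    _ ≤ ∑ _z ∈ Z, M := sum_le_sum fun z hz => (hs z hz).2
    _ = #Z * M := by rw [sum_const, nsmul_eq_mul]

end LocalSums

theorem norm_mul_sub_mul_le {R : Type*} [NormedRing R] (a b : R) :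
    ‖a * b - b * a‖ ≤ 2 * ‖b‖ * ‖a‖ :=
  calc ‖a * b - b * a‖ ≤ ‖a‖ * ‖b‖ + ‖b‖ * ‖a‖ :=
        (norm_sub_le _ _).trans (add_le_add (norm_mul_le _ _) (norm_mul_le _ _))
    _ = 2 * ‖b‖ * ‖a‖ := by ring

theorem commutator_sum_converges_general {Γ : Type*} (dist : Γ → Γ → ℕ)
    {A : Type*} [NormedRing A] [CompleteSpace A]
    (b p N : ℝ) (hb : 0 < b)
    (Φ : Finset Γ → A)
    (hΦ : ∀ x : Γ,
      Summable (fun X : {X : Finset Γ // x ∈ X} =>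
        ‖Φ X.1‖ * Real.exp (b * (finsetDiam dist X.1 : ℝ) ^ p)) ∧
      ∑' X : {X : Finset Γ // x ∈ X},
        ‖Φ X.1‖ * Real.exp (b * (finsetDiam dist X.1 : ℝ) ^ p) ≤ N)
    (O : A) (Z : Finset Γ)
    (hcomm : ∀ X : Finset Γ, Disjoint X Z → Φ X * O - O * Φ X = 0) :
    Summable (fun X : {X : Finset Γ // X.Nonempty} => Φ X.1 * O - O * Φ X.1) ∧
    ‖∑' X : {X : Finset Γ // X.Nonempty}, (Φ X.1 * O - O * Φ X.1)‖ ≤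
      2 * ‖O‖ * Z.card * N := by
  have hsite : ∀ z : Γ, Summable (fun X : {X : Finset Γ // z ∈ X} => 2 * ‖O‖ * ‖Φ X.1‖) ∧
      ∑' X : {X : Finset Γ // z ∈ X}, 2 * ‖O‖ * ‖Φ X.1‖ ≤ 2 * ‖O‖ * N := by
    intro z
    obtain ⟨hsum, hle⟩ := summable_and_tsum_le_of_one_le_weight (fun _ => norm_nonneg _)
      (fun X => Real.one_le_exp (by positivity)) (hΦ z).1
    refine ⟨hsum.mul_left _, ?_⟩
    rw [tsum_mul_left]
    exact mul_le_mul_of_nonneg_left (hle.trans (hΦ z).2) (by positivity)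
  have hsupp : Function.support (fun X => Φ X * O - O * Φ X) ⊆ ⋃ z ∈ Z, {X | z ∈ X} := by
    intro X hX
    obtain ⟨z, hzX, hzZ⟩ := not_disjoint_iff.1 (mt (hcomm X) hX)
    exact Set.mem_iUnion₂.2 ⟨z, hzZ, hzX⟩
  obtain ⟨hsum, hnorm⟩ := summable_and_norm_tsum_le_of_support_subset_biUnion
    (fun z => {X | z ∈ X}) Z (fun X => by positivity) (fun X => norm_mul_sub_mul_le (Φ X) O)
    hsupp fun z _ => hsite z
  have hsupp_nonempty : Function.support (fun X => Φ X * O - O * Φ X) ⊆ {X | X.Nonempty} :=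
    fun X hX => nonempty_iff_ne_empty.2 fun h => hX (h ▸ hcomm ∅ (disjoint_empty_left Z))
  refine ⟨hsum.subtype _, ?_⟩
  calc ‖∑' X : {X : Finset Γ // X.Nonempty}, (Φ X.1 * O - O * Φ X.1)‖
      = ‖∑' X, (Φ X * O - O * Φ X)‖ :=
        congrArg norm (tsum_subtype_eq_of_support_subset hsupp_nonempty)
    _ ≤ #Z * (2 * ‖O‖ * N) := hnorm
    _ = 2 * ‖O‖ * #Z * N := by ring

/-- Convergence of the commutator sum defining the derivation `δ^Φ(O)` on local observables:
if `|||Φ|||_b ≤ N`, `O` is an observable and `[Φ(X), O] = 0` whenever `X ∩ Z = ∅` for a finite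
nonempty `Z`, then `∑_X [Φ(X), O]` converges and its norm is at most `2 ‖O‖ |Z| N`. -/
theorem commutator_sum_converges {Γ : Type*} [Countable Γ] (dist : Γ → Γ → ℕ)
    (hdist0 : ∀ x y : Γ, dist x y = 0 ↔ x = y)
    (hsymm : ∀ x y : Γ, dist x y = dist y x)
    (htri : ∀ x y z : Γ, dist x z ≤ dist x y + dist y z)
    {A : Type*} [NormedRing A] [CompleteSpace A]
    (b p N : ℝ) (hb : 0 < b) (hp0 : 0 < p) (hp1 : p < 1) (hN : 0 ≤ N)
    (Φ : Finset Γ → A) (hΦempty : Φ ∅ = 0)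
    (hΦ : ∀ x : Γ,
      Summable (fun X : {X : Finset Γ // x ∈ X} =>
        ‖Φ X.1‖ * Real.exp (b * (finsetDiam dist X.1 : ℝ) ^ p)) ∧
      ∑' X : {X : Finset Γ // x ∈ X},
        ‖Φ X.1‖ * Real.exp (b * (finsetDiam dist X.1 : ℝ) ^ p) ≤ N)
    (O : A) (Z : Finset Γ) (hZ : Z.Nonempty)
    (hcomm : ∀ X : Finset Γ, Disjoint X Z → Φ X * O - O * Φ X = 0) :
    Summable (fun X : {X : Finset Γ // X.Nonempty} => Φ X.1 * O - O * Φ X.1) ∧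
    ‖∑' X : {X : Finset Γ // X.Nonempty}, (Φ X.1 * O - O * Φ X.1)‖ ≤
      2 * ‖O‖ * Z.card * N :=
  commutator_sum_converges_general dist b p N hb Φ hΦ O Z hcomm
end

section
/- Let 0 < p ≤ 1, b, b' > 0 and 0 < b'' < min(b, b'). Let Γ be a countable type with a graph distance 𝐝 : Γ → Γ → ℕ satisfying the metric axioms and Z ⊆ Γ nonempty. Then for all nonempty finite subsets Y, Y' ⊆ Γ with Y ∩ Y' ≠ ∅ one has ξ_{b'}(D(Y))·ξ_b(D_Z(Y')) / ξ_{b''}(D_Z(Y ∪ Y')) ≤ ξ_{min(b,b')−b''}(D(Y) + D_Z(Y')), where ξ_c(x) = exp(−c·x^p). -/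

private lemma dist_le_diam {Γ : Type*} (dist : Γ → Γ → ℕ) {X : Finset Γ} {x y : Γ}
    (hx : x ∈ X) (hy : y ∈ X) : dist x y ≤ finsetDiam dist X :=
  le_trans (Finset.le_sup (f := fun y => dist x y) hy) (Finset.le_sup (f := fun x => X.sup fun y => dist x y) hx)

private lemma diam_union {Γ : Type*} [DecidableEq Γ] (dist : Γ → Γ → ℕ)
    (htri : ∀ x y z : Γ, dist x z ≤ dist x y + dist y z)
    (hsymm : ∀ x y : Γ, dist x y = dist y x)
    {Y Y' : Finset Γ} (hYY' : (Y ∩ Y').Nonempty) :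
    finsetDiam dist (Y ∪ Y') ≤ finsetDiam dist Y + finsetDiam dist Y' := by
  obtain ⟨w, hw⟩ := hYY'
  rw [Finset.mem_inter] at hw
  apply Finset.sup_le
  intro x hx
  apply Finset.sup_le
  intro y hy
  rw [Finset.mem_union] at hx hy
  rcases hx with hx | hx <;> rcases hy with hy | hy
  · exact le_trans (dist_le_diam dist hx hy) (Nat.le_add_right _ _)
  · exact le_trans (htri x w y) (add_le_add (dist_le_diam dist hx hw.1) (dist_le_diam dist hw.2 hy))
  · rw [hsymm x y]
    exact le_trans (htri y w x) (add_le_add (dist_le_diam dist hy hw.1) (dist_le_diam dist hw.2 hx))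
  · exact le_trans (dist_le_diam dist hx hy) (Nat.le_add_left _ _)

private lemma distToSet_union_le {Γ : Type*} [DecidableEq Γ] (dist : Γ → Γ → ℕ)
    {Z : Set Γ} (hZ : Z.Nonempty) {Y Y' : Finset Γ} (hY' : Y'.Nonempty) :
    finsetDistToSet dist (Y ∪ Y') Z ≤ finsetDistToSet dist Y' Z := by
  obtain ⟨z, hz⟩ := hZ
  obtain ⟨y, hy⟩ := hY'
  apply csInf_le_csInf (OrderBot.bddBelow _)
  · exact ⟨dist y z, y, hy, z, hz, rfl⟩
  · rintro n ⟨x, hx, z', hz', rfl⟩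
    exact ⟨x, Finset.mem_union_right _ hx, z', hz', rfl⟩

private lemma rpow_subadd {p x y : ℝ} (hp0 : 0 ≤ p) (hp1 : p ≤ 1) (hx : 0 ≤ x) (hy : 0 ≤ y) :
    (x + y) ^ p ≤ x ^ p + y ^ p := by
  have h := NNReal.rpow_add_le_add_rpow x.toNNReal y.toNNReal hp0 hp1
  have h2 := NNReal.coe_le_coe.mpr h
  rw [NNReal.coe_rpow, NNReal.coe_add, NNReal.coe_add, NNReal.coe_rpow, NNReal.coe_rpow,
    Real.coe_toNNReal _ hx, Real.coe_toNNReal _ hy] at h2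
  exact h2

/-- The key estimate in the proof of Proposition 2.10:
`ξ_{b'}(D(Y)) ξ_b(D_Z(Y')) / ξ_{b''}(D_Z(Y ∪ Y')) ≤ ξ_{min(b,b') - b''}(D(Y) + D_Z(Y'))`
for overlapping nonempty finite sets `Y, Y'`. -/
theorem xi_ratio_estimate {Γ : Type*} [Countable Γ] [DecidableEq Γ] (dist : Γ → Γ → ℕ)
    (hdist0 : ∀ x y : Γ, dist x y = 0 ↔ x = y)
    (hsymm : ∀ x y : Γ, dist x y = dist y x)
    (htri : ∀ x y z : Γ, dist x z ≤ dist x y + dist y z)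
    (Z : Set Γ) (hZ : Z.Nonempty)
    (p b b' b'' : ℝ) (hp0 : 0 < p) (hp1 : p ≤ 1)
    (hb : 0 < b) (hb' : 0 < b') (hb''0 : 0 < b'') (hb'' : b'' < min b b')
    (Y Y' : Finset Γ) (hY : Y.Nonempty) (hY' : Y'.Nonempty)
    (hYY' : (Y ∩ Y').Nonempty) :
    Real.exp (-b' * (finsetDiam dist Y : ℝ) ^ p) *
        Real.exp (-b * (DZ dist Z Y' : ℝ) ^ p) /
        Real.exp (-b'' * (DZ dist Z (Y ∪ Y') : ℝ) ^ p) ≤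
      Real.exp (-(min b b' - b'') *
        ((finsetDiam dist Y : ℝ) + (DZ dist Z Y' : ℝ)) ^ p) := by
  set A := (finsetDiam dist Y : ℝ) with hA
  set B := (DZ dist Z Y' : ℝ) with hB
  set C := (DZ dist Z (Y ∪ Y') : ℝ) with hC
  have hA0 : (0:ℝ) ≤ A := Nat.cast_nonneg _
  have hB0 : (0:ℝ) ≤ B := Nat.cast_nonneg _
  have hCAB : C ≤ A + B := by
    rw [hA, hB, hC]
    have : DZ dist Z (Y ∪ Y') ≤ finsetDiam dist Y + DZ dist Z Y' := by
      unfold DZ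
      have h1 := diam_union dist htri hsymm hYY'
      have h2 := distToSet_union_le dist hZ hY' (Y := Y)
      omega
    exact_mod_cast this
  rw [div_le_iff₀ (Real.exp_pos _), ← Real.exp_add, ← Real.exp_add, Real.exp_le_exp]
  have hmin : min b b' ≤ b := min_le_left _ _
  have hmin' : min b b' ≤ b' := min_le_right _ _
  have h1 : min b b' * (A + B) ^ p ≤ b' * A ^ p + b * B ^ p := by
    have hsub := rpow_subadd hp0.le hp1 hA0 hB0
    have hAp : (0:ℝ) ≤ A ^ p := Real.rpow_nonneg hA0 _
    have hBp : (0:ℝ) ≤ B ^ p := Real.rpow_nonneg hB0 _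
    calc min b b' * (A + B) ^ p ≤ min b b' * (A ^ p + B ^ p) := by
          apply mul_le_mul_of_nonneg_left hsub
          exact (hb''0.trans hb'').le
      _ = min b b' * A ^ p + min b b' * B ^ p := mul_add _ _ _
      _ ≤ b' * A ^ p + b * B ^ p :=
          add_le_add (mul_le_mul_of_nonneg_right hmin' hAp) (mul_le_mul_of_nonneg_right hmin hBp)
  have h2 : b'' * C ^ p ≤ b'' * (A + B) ^ p := by
    apply mul_le_mul_of_nonneg_left _ hb''0.le
    exact Real.rpow_le_rpow (Nat.cast_nonneg _) hCAB hp0.le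
  nlinarith [h1, h2]
end

section
/- (Proposition 2.10 of the paper.) Let Γ be a countable type with a graph distance 𝐝 : Γ → Γ → ℕ and constants κ > 0, d ≥ 1 such that every sphere {y : 𝐝(x,y) = r} has at most κ·(1+r)^{d−1} elements. Let A be a complex Banach algebra, Z ⊆ Γ nonempty, 0 < p < 1, b, b' > 0 and 0 < b'' < min(b, b'). Let Φ, Ψ be maps from finite subsets of Γ to A vanishing on ∅, and N, M ≥ 0 such that for every x ∈ Γ: ∑_{Y ∋ x} ‖Φ(Y)‖·exp(b'·D(Y)^p) ≤ N and ∑_{Y' ∋ x} ‖Ψ(Y')‖·exp(b·D_Z(Y')^p) ≤ M (both families summable). For each nonempty finite X ⊆ Γ define δ^Φ(Ψ)(X) = ∑ i·[Φ(Y), Ψ(Y')], the (finite) sum running over pairs of nonempty subsets Y, Y' of X with Y ∪ Y' = X and Y ∩ Y' ≠ ∅. Then there exists a constant C_δ, depending only on b, b', b'', p, d and κ, such that for every x ∈ Γ the family (‖δ^Φ(Ψ)(X)‖·exp(b''·D_Z(X)^p))_{X ∋ x, X nonempty finite} is summable with sum at most C_δ·N·M. -/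
/-- The interaction `δ^Φ(Ψ)(X) = ∑ i [Φ(Y), Ψ(Y')]`, the sum running over pairs of subsets
`Y, Y' ⊆ X` with `Y ∪ Y' = X` and `Y ∩ Y' ≠ ∅`. -/
noncomputable def deltaInteraction {Γ : Type*} {A : Type*} [Ring A] [Module ℂ A]
    (Φ Ψ : Finset Γ → A) (X : Finset Γ) : A :=
  haveI := Classical.decEq Γ
  ∑ Y ∈ X.powerset, ∑ Y' ∈ X.powerset,
    if Y ∪ Y' = X ∧ (Y ∩ Y').Nonempty
    then Complex.I • (Φ Y * Ψ Y' - Ψ Y' * Φ Y) else 0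

/-!
Each term `i[Φ(Y), Ψ(Y')]` of `δ^Φ(Ψ)(X)` has norm at most `2‖Φ(Y)‖‖Ψ(Y')‖`, and since `Y` and
`Y'` overlap, `D_Z(X) ≤ D(Y) + D_Z(Y')`; subadditivity of `t ↦ t ^ p` then splits the weight
`exp(b'' D_Z(X)^p)` between the two factors. A pair `(Y, Y')` occurs for the single set
`X = Y ∪ Y'`, and `x ∈ X` lies in `Y` or in `Y'`. If `x ∈ Y`, the sets `Y'` meeting `Y` contribute
at most `|Y| M`, and the sphere bound gives `|Y| ≤ κ (1 + D(Y))^d`, which is absorbed by the gap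
`exp((min b b' - b'') D(Y)^p)` between the weights; symmetrically if `x ∈ Y'`.
-/

open Real Finset
open scoped ENNReal

lemma rpow_add_le_add_rpow_of_nonneg {x y q : ℝ} (hx : 0 ≤ x) (hy : 0 ≤ y) (hq : 0 ≤ q)
    (hq1 : q ≤ 1) : (x + y) ^ q ≤ x ^ q + y ^ q := by
  lift x to NNReal using hx
  lift y to NNReal using hy
  exact_mod_cast NNReal.rpow_add_le_add_rpow x y hq hq1

lemma exists_one_add_pow_le_mul_exp_rpow (n : ℕ) {β p : ℝ} (hβ : 0 < β) (hp0 : 0 < p)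
    (hp1 : p ≤ 1) : ∃ C : ℝ, 0 < C ∧ ∀ t : ℝ, 0 ≤ t → (1 + t) ^ n ≤ C * exp (β * t ^ p) := by
  -- `log y ≤ y ^ p / p` at `y = l * (1 + t)`, with `l` so small that `n * l ^ p / p ≤ β`.
  set μ : ℝ := β * p / (n + 1)
  have hμ : 0 < μ := by positivity
  set l : ℝ := μ ^ p⁻¹
  have hl : 0 < l := by positivity
  have hlp : l ^ p = μ := rpow_inv_rpow hμ.le hp0.ne'
  refine ⟨exp (β - n * log l), exp_pos _, fun t ht => ?_⟩
  have h1t : 0 < 1 + t := by linarith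
  have hlog : log l + log (1 + t) ≤ μ / p * (1 + t) ^ p := by
    have := log_le_rpow_div (mul_pos hl h1t).le hp0
    rwa [log_mul hl.ne' h1t.ne', mul_rpow hl.le h1t.le, hlp, mul_div_right_comm] at this
  have hsub : (1 + t) ^ p ≤ 1 + t ^ p := by
    simpa using rpow_add_le_add_rpow_of_nonneg zero_le_one ht hp0.le hp1
  have hcoef : n * (μ / p) ≤ β := by
    rw [mul_div_assoc', div_le_iff₀ hp0, mul_div_assoc', div_le_iff₀ (by positivity)]
    nlinarith
  have hexp : n * log (1 + t) ≤ β * t ^ p + (β - n * log l) := by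
    have hpow : 0 ≤ (1 + t) ^ p := by positivity
    calc n * log (1 + t) ≤ n * (μ / p) * (1 + t) ^ p - n * log l := by
          linarith [mul_le_mul_of_nonneg_left hlog (Nat.cast_nonneg (α := ℝ) n)]
      _ ≤ β * (1 + t ^ p) - n * log l := by linarith [mul_le_mul hcoef hsub hpow hβ.le]
      _ = β * t ^ p + (β - n * log l) := by ring
  calc (1 + t) ^ n = exp (n * log (1 + t)) := by rw [← log_pow, exp_log (by positivity)]
    _ ≤ exp (β * t ^ p + (β - n * log l)) := exp_le_exp.2 hexp
    _ = exp (β - n * log l) * exp (β * t ^ p) := by rw [exp_add, mul_comm]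

lemma summable_and_tsum_le_of_tsum_ofReal_le {ι : Type*} {f : ι → ℝ} (hf : ∀ i, 0 ≤ f i)
    {C : ℝ} (hC : 0 ≤ C) (h : ∑' i, ENNReal.ofReal (f i) ≤ ENNReal.ofReal C) :
    Summable f ∧ ∑' i, f i ≤ C := by
  have hs : Summable f :=
    (ENNReal.summable_toReal (ne_top_of_le_ne_top ENNReal.ofReal_ne_top h)).congr
      fun i => ENNReal.toReal_ofReal (hf i)
  rw [← ENNReal.ofReal_tsum_of_nonneg hf hs, ENNReal.ofReal_le_ofReal_iff hC] at h
  exact ⟨hs, h⟩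

section Weights

variable {ι : Type*} {a ρ : ι → ℝ} {c c' N : ℝ}

lemma tsum_ofReal_mul_exp_le_of_le (ha : ∀ i, 0 ≤ a i) (hρ : ∀ i, 0 ≤ ρ i) (hc : c ≤ c')
    (h : Summable (fun i => a i * exp (c' * ρ i)) ∧ ∑' i, a i * exp (c' * ρ i) ≤ N) :
    ∑' i, ENNReal.ofReal (a i * exp (c * ρ i)) ≤ ENNReal.ofReal N := by
  have hmono (i : ι) : a i * exp (c * ρ i) ≤ a i * exp (c' * ρ i) := by
    have := ha i
    have := hρ i
    gcongr
  calc ∑' i, ENNReal.ofReal (a i * exp (c * ρ i))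
      ≤ ∑' i, ENNReal.ofReal (a i * exp (c' * ρ i)) :=
        ENNReal.tsum_le_tsum fun i => ENNReal.ofReal_le_ofReal (hmono i)
    _ = ENNReal.ofReal (∑' i, a i * exp (c' * ρ i)) :=
        (ENNReal.ofReal_tsum_of_nonneg (fun i => by have := ha i; positivity) h.1).symm
    _ ≤ ENNReal.ofReal N := ENNReal.ofReal_le_ofReal h.2

lemma tsum_ofReal_mul_exp_mul_le (ha : ∀ i, 0 ≤ a i) (hρ : ∀ i, 0 ≤ ρ i) {n : ι → ℕ}
    {K β : ℝ} (hK : 0 ≤ K) (hn : ∀ i, (n i : ℝ) ≤ K * exp (β * ρ i)) (hc : c + β ≤ c')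
    (h : Summable (fun i => a i * exp (c' * ρ i)) ∧ ∑' i, a i * exp (c' * ρ i) ≤ N) :
    ∑' i, ENNReal.ofReal (a i * exp (c * ρ i)) * n i ≤ ENNReal.ofReal K * ENNReal.ofReal N := by
  have hterm (i : ι) : ENNReal.ofReal (a i * exp (c * ρ i)) * n i ≤
      ENNReal.ofReal K * ENNReal.ofReal (a i * exp (c' * ρ i)) := by
    have := ha i
    have := hρ i
    rw [← ENNReal.ofReal_natCast, ← ENNReal.ofReal_mul (by positivity), ← ENNReal.ofReal_mul hK]
    refine ENNReal.ofReal_le_ofReal ?_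
    calc a i * exp (c * ρ i) * n i ≤ a i * exp (c * ρ i) * (K * exp (β * ρ i)) := by
          gcongr; exact hn i
      _ = K * (a i * exp ((c + β) * ρ i)) := by rw [add_mul, exp_add]; ring
      _ ≤ K * (a i * exp (c' * ρ i)) := by gcongr
  calc ∑' i, ENNReal.ofReal (a i * exp (c * ρ i)) * n i
      ≤ ∑' i, ENNReal.ofReal K * ENNReal.ofReal (a i * exp (c' * ρ i)) :=
        ENNReal.tsum_le_tsum hterm
    _ = ENNReal.ofReal K * ∑' i, ENNReal.ofReal (a i * exp (c' * ρ i)) := ENNReal.tsum_mul_left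
    _ ≤ ENNReal.ofReal K * ENNReal.ofReal N := by
        gcongr
        exact tsum_ofReal_mul_exp_le_of_le ha hρ le_rfl h

end Weights

section Metric

variable {Γ : Type*} (dist : Γ → Γ → ℕ)

lemma dist_le_finsetDiam {X : Finset Γ} {x y : Γ} (hx : x ∈ X) (hy : y ∈ X) :
    dist x y ≤ finsetDiam dist X :=
  (le_sup (f := dist x) hy).trans (le_sup (f := fun x => X.sup (dist x)) hx)

variable {dist}

lemma finsetDiam_union_le [DecidableEq Γ] (htri : ∀ x y z, dist x z ≤ dist x y + dist y z)
    {Y Y' : Finset Γ} (hYY' : (Y ∩ Y').Nonempty) :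
    finsetDiam dist (Y ∪ Y') ≤ finsetDiam dist Y + finsetDiam dist Y' := by
  obtain ⟨z, hz⟩ := hYY'
  rw [mem_inter] at hz
  have hcross {U V : Finset Γ} (hzU : z ∈ U) (hzV : z ∈ V) {u v : Γ} (hu : u ∈ U) (hv : v ∈ V) :
      dist u v ≤ finsetDiam dist U + finsetDiam dist V :=
    (htri u z v).trans
      (add_le_add (dist_le_finsetDiam dist hu hzU) (dist_le_finsetDiam dist hzV hv))
  refine Finset.sup_le fun u hu => Finset.sup_le fun v hv => ?_
  rcases mem_union.1 hu with hu | hu <;> rcases mem_union.1 hv with hv | hv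
  · exact (dist_le_finsetDiam dist hu hv).trans (Nat.le_add_right _ _)
  · exact hcross hz.1 hz.2 hu hv
  · exact (hcross hz.2 hz.1 hu hv).trans_eq (Nat.add_comm _ _)
  · exact (dist_le_finsetDiam dist hu hv).trans (Nat.le_add_left _ _)

lemma finsetDistToSet_le_of_subset {Y X : Finset Γ} {Z : Set Γ} (hYX : Y ⊆ X) (hY : Y.Nonempty)
    (hZ : Z.Nonempty) : finsetDistToSet dist X Z ≤ finsetDistToSet dist Y Z := by
  obtain ⟨y, hy⟩ := hY
  obtain ⟨z, hz⟩ := hZ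
  obtain ⟨y', hy', z', hz', h⟩ :=
    Nat.sInf_mem (s := {n | ∃ x ∈ Y, ∃ z ∈ Z, dist x z = n}) ⟨dist y z, y, hy, z, hz, rfl⟩
  exact Nat.sInf_le ⟨y', hYX hy', z', hz', h⟩

lemma DZ_union_le [DecidableEq Γ] (htri : ∀ x y z, dist x z ≤ dist x y + dist y z)
    {Z : Set Γ} (hZ : Z.Nonempty) {Y Y' : Finset Γ} (hYY' : (Y ∩ Y').Nonempty) :
    DZ dist Z (Y ∪ Y') ≤ finsetDiam dist Y + DZ dist Z Y' := by
  have := finsetDiam_union_le htri hYY'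
  have := finsetDistToSet_le_of_subset (dist := dist) (subset_union_right (s₁ := Y))
    (hYY'.mono inter_subset_right) hZ
  unfold DZ
  omega

lemma card_le_of_sphere_bound {κ : ℝ} (hκ : 0 ≤ κ) {k : ℕ}
    (hsph : ∀ (x : Γ) (r : ℕ), {y : Γ | dist x y = r}.Finite ∧
      ({y : Γ | dist x y = r}.ncard : ℝ) ≤ κ * (1 + (r : ℝ)) ^ k)
    {Y : Finset Γ} {x : Γ} (hx : x ∈ Y) :
    (#Y : ℝ) ≤ κ * (1 + (finsetDiam dist Y : ℝ)) ^ (k + 1) := by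
  classical
  set D := finsetDiam dist Y
  have hfiber (r : ℕ) (hr : r ∈ range (D + 1)) :
      (#{y ∈ Y | dist x y = r} : ℝ) ≤ κ * (1 + D) ^ k := by
    have hsub : (({y ∈ Y | dist x y = r} : Finset Γ) : Set Γ) ⊆ {y | dist x y = r} :=
      fun y hy => (mem_filter.1 hy).2
    calc (#{y ∈ Y | dist x y = r} : ℝ) ≤ ({y : Γ | dist x y = r}.ncard : ℝ) := by
          rw [← Set.ncard_coe_finset]
          exact_mod_cast Set.ncard_le_ncard hsub (hsph x r).1
      _ ≤ κ * (1 + r) ^ k := (hsph x r).2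
      _ ≤ κ * (1 + D) ^ k := by
          gcongr
          exact_mod_cast Nat.lt_succ_iff.1 (mem_range.1 hr)
  have hmaps : (Y : Set Γ).MapsTo (dist x) (range (D + 1)) := fun y hy =>
    mem_range.2 (Nat.lt_succ_of_le (dist_le_finsetDiam dist hx hy))
  calc (#Y : ℝ) = ∑ r ∈ range (D + 1), (#{y ∈ Y | dist x y = r} : ℝ) := by
        exact_mod_cast card_eq_sum_card_fiberwise hmaps
    _ ≤ ∑ r ∈ range (D + 1), κ * (1 + D) ^ k := sum_le_sum hfiber
    _ = κ * (1 + D) ^ (k + 1) := by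
        rw [sum_const, card_range, nsmul_eq_mul, pow_succ]; push_cast; ring

lemma card_le_mul_exp_rpow {κ : ℝ} (hκ : 0 ≤ κ) {k : ℕ}
    (hsph : ∀ (x : Γ) (r : ℕ), {y : Γ | dist x y = r}.Finite ∧
      ({y : Γ | dist x y = r}.ncard : ℝ) ≤ κ * (1 + (r : ℝ)) ^ k)
    {C β p : ℝ} (hC : ∀ t : ℝ, 0 ≤ t → (1 + t) ^ (k + 1) ≤ C * exp (β * t ^ p))
    {Y : Finset Γ} {x : Γ} (hx : x ∈ Y) {t : ℕ} (ht : finsetDiam dist Y ≤ t) :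
    (#Y : ℝ) ≤ κ * C * exp (β * (t : ℝ) ^ p) := by
  calc (#Y : ℝ) ≤ κ * (1 + (finsetDiam dist Y : ℝ)) ^ (k + 1) := card_le_of_sphere_bound hκ hsph hx
    _ ≤ κ * (1 + (t : ℝ)) ^ (k + 1) := by gcongr
    _ ≤ κ * (C * exp (β * (t : ℝ) ^ p)) := by gcongr; exact hC _ t.cast_nonneg
    _ = κ * C * exp (β * (t : ℝ) ^ p) := by ring

lemma exp_mul_rpow_DZ_union_le [DecidableEq Γ] (htri : ∀ x y z, dist x z ≤ dist x y + dist y z)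
    {Z : Set Γ} (hZ : Z.Nonempty) {c p : ℝ} (hc : 0 ≤ c) (hp0 : 0 ≤ p) (hp1 : p ≤ 1)
    {Y Y' : Finset Γ} (hYY' : (Y ∩ Y').Nonempty) :
    exp (c * (DZ dist Z (Y ∪ Y') : ℝ) ^ p) ≤
      exp (c * (finsetDiam dist Y : ℝ) ^ p) * exp (c * (DZ dist Z Y' : ℝ) ^ p) := by
  rw [← exp_add, ← mul_add]
  gcongr
  calc (DZ dist Z (Y ∪ Y') : ℝ) ^ p ≤ ((finsetDiam dist Y : ℝ) + DZ dist Z Y') ^ p := by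
        gcongr
        exact_mod_cast DZ_union_le htri hZ hYY'
    _ ≤ _ := rpow_add_le_add_rpow_of_nonneg (by positivity) (by positivity) hp0 hp1

end Metric

lemma tsum_subtype_ite_val_eq {β M : Type*} [AddCommMonoid M] [TopologicalSpace M]
    (P : β → Prop) (b : β) (c : M) [Decidable (P b)] [DecidableEq β] :
    ∑' X : {X // P X}, (if b = X.1 then c else 0) = if P b then c else 0 := by
  split_ifs with hb
  · refine (tsum_congr fun X => ?_).trans (tsum_ite_eq (⟨b, hb⟩ : {X // P X}) (fun _ => c))
    exact if_congr (by rw [Subtype.ext_iff, eq_comm]) rfl rfl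
  · refine (tsum_congr fun X => if_neg ?_).trans tsum_zero
    rintro rfl
    exact hb X.2

section OverlappingCovers

variable {α : Type*} [DecidableEq α]

def overlappingCovers (X : Finset α) : Finset (Finset α × Finset α) :=
  {q ∈ X.powerset ×ˢ X.powerset | q.1 ∪ q.2 = X ∧ (q.1 ∩ q.2).Nonempty}

lemma mem_overlappingCovers {X : Finset α} {q : Finset α × Finset α} :
    q ∈ overlappingCovers X ↔ q.1 ∪ q.2 = X ∧ (q.1 ∩ q.2).Nonempty := by
  simp only [overlappingCovers, mem_filter, mem_product, mem_powerset, and_iff_right_iff_imp]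
  rintro ⟨rfl, -⟩
  exact ⟨subset_union_left, subset_union_right⟩

lemma tsum_subtype_mem_eq (f : Finset α → ℝ≥0∞) (x : α) :
    ∑' Y : {Y : Finset α // x ∈ Y}, f Y = ∑' Y, if x ∈ Y then f Y else 0 := by
  refine (_root_.tsum_subtype {Y | x ∈ Y} f).trans (tsum_congr fun Y => ?_)
  simp [Set.indicator_apply]

lemma tsum_ite_inter_nonempty_le (g : Finset α → ℝ≥0∞) {M : ℝ≥0∞}
    (hg : ∀ y, ∑' Y : {Y : Finset α // y ∈ Y}, g Y ≤ M) (Y : Finset α) :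
    ∑' Y', (if (Y ∩ Y').Nonempty then g Y' else 0) ≤ #Y * M := by
  have hcover (Y' : Finset α) :
      (if (Y ∩ Y').Nonempty then g Y' else 0) ≤ ∑ y ∈ Y, if y ∈ Y' then g Y' else 0 := by
    split_ifs with h
    · obtain ⟨y, hy⟩ := h
      rw [mem_inter] at hy
      simpa [hy.2] using single_le_sum (f := fun y => if y ∈ Y' then g Y' else 0)
        (fun _ _ => zero_le) hy.1
    · exact zero_le
  calc ∑' Y', (if (Y ∩ Y').Nonempty then g Y' else 0)
      ≤ ∑' Y', ∑ y ∈ Y, if y ∈ Y' then g Y' else 0 := ENNReal.tsum_le_tsum hcover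
    _ = ∑ y ∈ Y, ∑' Y' : {Y' : Finset α // y ∈ Y'}, g Y' := by
        rw [Summable.tsum_finsetSum fun _ _ => ENNReal.summable]
        simp_rw [tsum_subtype_mem_eq]
    _ ≤ ∑ _y ∈ Y, M := sum_le_sum fun y _ => hg y
    _ = #Y * M := by rw [sum_const, nsmul_eq_mul]

lemma tsum_ite_mem_fst_and_inter_nonempty_le (f g : Finset α → ℝ≥0∞) {M : ℝ≥0∞}
    (hg : ∀ y, ∑' Y : {Y : Finset α // y ∈ Y}, g Y ≤ M) (x : α) :
    ∑' q : Finset α × Finset α,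
        (if x ∈ q.1 ∧ (q.1 ∩ q.2).Nonempty then f q.1 * g q.2 else 0) ≤
      (∑' Y : {Y : Finset α // x ∈ Y}, f Y.1 * #Y.1) * M := by
  rw [ENNReal.tsum_prod', tsum_subtype_mem_eq (fun Y => f Y * #Y), ← ENNReal.tsum_mul_right]
  refine ENNReal.tsum_le_tsum fun Y => ?_
  by_cases hx : x ∈ Y
  · simp only [hx, true_and, if_true]
    calc ∑' Y', (if (Y ∩ Y').Nonempty then f Y * g Y' else 0)
        = f Y * ∑' Y', (if (Y ∩ Y').Nonempty then g Y' else 0) := by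
          rw [← ENNReal.tsum_mul_left]
          simp only [mul_ite, mul_zero]
      _ ≤ f Y * (#Y * M) := by gcongr; exact tsum_ite_inter_nonempty_le g hg Y
      _ = f Y * #Y * M := (mul_assoc _ _ _).symm
  · simp [hx]

lemma tsum_sum_overlappingCovers_le (f g : Finset α → ℝ≥0∞) {N M : ℝ≥0∞}
    (hf : ∀ y, ∑' Y : {Y : Finset α // y ∈ Y}, f Y ≤ N)
    (hg : ∀ y, ∑' Y : {Y : Finset α // y ∈ Y}, g Y ≤ M) (x : α) :
    ∑' X : {X : Finset α // x ∈ X}, ∑ q ∈ overlappingCovers X.1, f q.1 * g q.2 ≤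
      (∑' Y : {Y : Finset α // x ∈ Y}, f Y.1 * #Y.1) * M +
        (∑' Y : {Y : Finset α // x ∈ Y}, g Y.1 * #Y.1) * N := by
  set T : Finset α × Finset α → ℝ≥0∞ := fun q => f q.1 * g q.2
  have hsplit (q : Finset α × Finset α) :
      (if x ∈ q.1 ∪ q.2 ∧ (q.1 ∩ q.2).Nonempty then T q else 0) ≤
        (if x ∈ q.1 ∧ (q.1 ∩ q.2).Nonempty then T q else 0) +
          (if x ∈ q.2 ∧ (q.1 ∩ q.2).Nonempty then T q else 0) := by
    by_cases h1 : x ∈ q.1 <;> by_cases h2 : x ∈ q.2 <;> simp [h1, h2]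
  have hswap : ∑' q : Finset α × Finset α,
      (if x ∈ q.2 ∧ (q.1 ∩ q.2).Nonempty then T q else 0) =
      ∑' q : Finset α × Finset α,
        (if x ∈ q.1 ∧ (q.1 ∩ q.2).Nonempty then g q.1 * f q.2 else 0) := by
    rw [← (Equiv.prodComm _ _).tsum_eq]
    simp only [Equiv.prodComm_apply, Prod.fst_swap, Prod.snd_swap, inter_comm, T, mul_comm]
  calc ∑' X : {X : Finset α // x ∈ X}, ∑ q ∈ overlappingCovers X.1, T q
      = ∑' q, ∑' X : {X : Finset α // x ∈ X},
          if q.1 ∪ q.2 = X.1 ∧ (q.1 ∩ q.2).Nonempty then T q else 0 := by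
        rw [← ENNReal.tsum_comm]
        refine tsum_congr fun X => ?_
        rw [sum_eq_tsum_indicator]
        refine tsum_congr fun q => ?_
        simp [Set.indicator_apply, mem_overlappingCovers]
    _ = ∑' q, if x ∈ q.1 ∪ q.2 ∧ (q.1 ∩ q.2).Nonempty then T q else 0 := by
        refine tsum_congr fun q => ?_
        by_cases hq : (q.1 ∩ q.2).Nonempty
        · simpa only [hq, and_true] using tsum_subtype_ite_val_eq (x ∈ ·) (q.1 ∪ q.2) (T q)
        · simp [hq]
    _ ≤ _ := (ENNReal.tsum_le_tsum hsplit).trans_eq ENNReal.tsum_add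
    _ ≤ _ := by
        rw [hswap]
        exact add_le_add (tsum_ite_mem_fst_and_inter_nonempty_le f g hg x)
          (tsum_ite_mem_fst_and_inter_nonempty_le g f hf x)

end OverlappingCovers

section Interaction

variable {Γ A : Type*} [DecidableEq Γ]

lemma deltaInteraction_eq_sum_overlappingCovers [Ring A] [Module ℂ A] (Φ Ψ : Finset Γ → A)
    (X : Finset Γ) : deltaInteraction Φ Ψ X =
      ∑ q ∈ overlappingCovers X, Complex.I • (Φ q.1 * Ψ q.2 - Ψ q.2 * Φ q.1) := by
  rw [overlappingCovers, sum_filter, sum_product, deltaInteraction]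
  convert rfl

lemma norm_deltaInteraction_le [NormedRing A] [NormedSpace ℂ A] (Φ Ψ : Finset Γ → A)
    (X : Finset Γ) :
    ‖deltaInteraction Φ Ψ X‖ ≤ ∑ q ∈ overlappingCovers X, 2 * (‖Φ q.1‖ * ‖Ψ q.2‖) := by
  rw [deltaInteraction_eq_sum_overlappingCovers]
  refine (norm_sum_le _ _).trans (sum_le_sum fun q _ => ?_)
  rw [norm_smul, Complex.norm_I, one_mul, two_mul]
  exact (norm_sub_le _ _).trans
    (add_le_add (norm_mul_le _ _) ((norm_mul_le _ _).trans_eq (mul_comm _ _)))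

lemma ofReal_norm_deltaInteraction_mul_exp_le [NormedRing A] [NormedSpace ℂ A]
    {dist : Γ → Γ → ℕ} (htri : ∀ x y z, dist x z ≤ dist x y + dist y z)
    {Z : Set Γ} (hZ : Z.Nonempty) {c p : ℝ} (hc : 0 ≤ c) (hp0 : 0 ≤ p) (hp1 : p ≤ 1)
    (Φ Ψ : Finset Γ → A) (X : Finset Γ) :
    ENNReal.ofReal (‖deltaInteraction Φ Ψ X‖ * exp (c * (DZ dist Z X : ℝ) ^ p)) ≤
      2 * ∑ q ∈ overlappingCovers X,
        ENNReal.ofReal (‖Φ q.1‖ * exp (c * (finsetDiam dist q.1 : ℝ) ^ p)) *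
          ENNReal.ofReal (‖Ψ q.2‖ * exp (c * (DZ dist Z q.2 : ℝ) ^ p)) := by
  have hterm (q) (hq : q ∈ overlappingCovers X) :
      2 * (‖Φ q.1‖ * ‖Ψ q.2‖) * exp (c * (DZ dist Z X : ℝ) ^ p) ≤
        2 * ((‖Φ q.1‖ * exp (c * (finsetDiam dist q.1 : ℝ) ^ p)) *
          (‖Ψ q.2‖ * exp (c * (DZ dist Z q.2 : ℝ) ^ p))) := by
    obtain ⟨rfl, hov⟩ := mem_overlappingCovers.1 hq
    rw [mul_assoc, mul_mul_mul_comm]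
    gcongr
    exact exp_mul_rpow_DZ_union_le htri hZ hc hp0 hp1 hov
  calc ENNReal.ofReal (‖deltaInteraction Φ Ψ X‖ * exp (c * (DZ dist Z X : ℝ) ^ p))
      ≤ ENNReal.ofReal (2 * ∑ q ∈ overlappingCovers X,
          (‖Φ q.1‖ * exp (c * (finsetDiam dist q.1 : ℝ) ^ p)) *
            (‖Ψ q.2‖ * exp (c * (DZ dist Z q.2 : ℝ) ^ p))) := by
        refine ENNReal.ofReal_le_ofReal ?_
        rw [mul_sum]
        exact (mul_le_mul_of_nonneg_right (norm_deltaInteraction_le Φ Ψ X) (exp_pos _).le).trans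
          ((sum_mul _ _ _).trans_le (sum_le_sum hterm))
    _ = _ := by
        rw [ENNReal.ofReal_mul zero_le_two, ENNReal.ofReal_sum_of_nonneg fun _ _ => by positivity]
        congr 1
        · exact ENNReal.ofReal_ofNat 2
        · exact sum_congr rfl fun q _ => ENNReal.ofReal_mul (by positivity)

end Interaction

theorem delta_interaction_norm_bound_general (p b b' b'' : ℝ) (hp0 : 0 < p) (hp1 : p < 1)
    (hb''0 : 0 < b'') (hb'' : b'' < min b b')
    (κ : ℝ) (hκ : 0 < κ) (d : ℕ) :
    ∃ C : ℝ, 0 < C ∧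
      ∀ (Γ : Type) [Countable Γ], ∀ (dist : Γ → Γ → ℕ),
        (∀ x y : Γ, dist x y = 0 ↔ x = y) →
        (∀ x y : Γ, dist x y = dist y x) →
        (∀ x y z : Γ, dist x z ≤ dist x y + dist y z) →
        (∀ (x : Γ) (r : ℕ), {y : Γ | dist x y = r}.Finite ∧
          ({y : Γ | dist x y = r}.ncard : ℝ) ≤ κ * (1 + (r : ℝ)) ^ (d - 1)) →
        ∀ (Z : Set Γ), Z.Nonempty →
        ∀ (A : Type) [NormedRing A] [NormedAlgebra ℂ A] [CompleteSpace A],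
        ∀ (Φ Ψ : Finset Γ → A) (N M : ℝ),
          Φ ∅ = 0 → Ψ ∅ = 0 → 0 ≤ N → 0 ≤ M →
          (∀ x : Γ,
            Summable (fun Y : {Y : Finset Γ // x ∈ Y} =>
              ‖Φ Y.1‖ * Real.exp (b' * (finsetDiam dist Y.1 : ℝ) ^ p)) ∧
            ∑' Y : {Y : Finset Γ // x ∈ Y},
              ‖Φ Y.1‖ * Real.exp (b' * (finsetDiam dist Y.1 : ℝ) ^ p) ≤ N) →
          (∀ x : Γ,
            Summable (fun Y' : {Y' : Finset Γ // x ∈ Y'} =>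
              ‖Ψ Y'.1‖ * Real.exp (b * (DZ dist Z Y'.1 : ℝ) ^ p)) ∧
            ∑' Y' : {Y' : Finset Γ // x ∈ Y'},
              ‖Ψ Y'.1‖ * Real.exp (b * (DZ dist Z Y'.1 : ℝ) ^ p) ≤ M) →
          ∀ x : Γ,
            Summable (fun X : {X : Finset Γ // x ∈ X} =>
              ‖deltaInteraction Φ Ψ X.1‖ * Real.exp (b'' * (DZ dist Z X.1 : ℝ) ^ p)) ∧
            ∑' X : {X : Finset Γ // x ∈ X},
              ‖deltaInteraction Φ Ψ X.1‖ * Real.exp (b'' * (DZ dist Z X.1 : ℝ) ^ p) ≤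
                C * N * M := by
  obtain ⟨C, hC0, hC⟩ :=
    exists_one_add_pow_le_mul_exp_rpow (d - 1 + 1) (sub_pos.2 hb'') hp0 hp1.le
  refine ⟨4 * (κ * C), by positivity, ?_⟩
  intro Γ _ dist _ _ htri hsph Z hZ A _ _ _ Φ Ψ N M _ _ hN hM hΦ hΨ x
  classical
  set φ : Finset Γ → ℝ≥0∞ := fun Y =>
    ENNReal.ofReal (‖Φ Y‖ * exp (b'' * (finsetDiam dist Y : ℝ) ^ p))
  set ψ : Finset Γ → ℝ≥0∞ := fun Y =>
    ENNReal.ofReal (‖Ψ Y‖ * exp (b'' * (DZ dist Z Y : ℝ) ^ p))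
  have hφ (y : Γ) : ∑' Y : {Y : Finset Γ // y ∈ Y}, φ Y.1 ≤ ENNReal.ofReal N :=
    tsum_ofReal_mul_exp_le_of_le (fun _ => norm_nonneg _) (fun _ => by positivity)
      (hb''.le.trans (min_le_right _ _)) (hΦ y)
  have hψ (y : Γ) : ∑' Y : {Y : Finset Γ // y ∈ Y}, ψ Y.1 ≤ ENNReal.ofReal M :=
    tsum_ofReal_mul_exp_le_of_le (fun _ => norm_nonneg _) (fun _ => by positivity)
      (hb''.le.trans (min_le_left _ _)) (hΨ y)
  have hφcard : ∑' Y : {Y : Finset Γ // x ∈ Y}, φ Y.1 * #Y.1 ≤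
      ENNReal.ofReal (κ * C) * ENNReal.ofReal N :=
    tsum_ofReal_mul_exp_mul_le (fun _ => norm_nonneg _) (fun _ => by positivity) (by positivity)
      (fun Y => card_le_mul_exp_rpow hκ.le hsph hC Y.2 le_rfl)
      (by linarith [min_le_right b b']) (hΦ x)
  have hψcard : ∑' Y : {Y : Finset Γ // x ∈ Y}, ψ Y.1 * #Y.1 ≤
      ENNReal.ofReal (κ * C) * ENNReal.ofReal M :=
    tsum_ofReal_mul_exp_mul_le (fun _ => norm_nonneg _) (fun _ => by positivity) (by positivity)
      (fun Y => card_le_mul_exp_rpow hκ.le hsph hC Y.2 (Nat.le_add_right _ _))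
      (by linarith [min_le_left b b']) (hΨ x)
  refine summable_and_tsum_le_of_tsum_ofReal_le (fun _ => by positivity) (by positivity) ?_
  calc _ ≤ 2 * ∑' X : {X : Finset Γ // x ∈ X}, ∑ q ∈ overlappingCovers X.1, φ q.1 * ψ q.2 := by
        rw [← ENNReal.tsum_mul_left]
        exact ENNReal.tsum_le_tsum fun X =>
          ofReal_norm_deltaInteraction_mul_exp_le htri hZ hb''0.le hp0.le hp1.le Φ Ψ X.1
    _ ≤ 2 * ((ENNReal.ofReal (κ * C) * ENNReal.ofReal N) * ENNReal.ofReal M +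
          (ENNReal.ofReal (κ * C) * ENNReal.ofReal M) * ENNReal.ofReal N) := by
        grw [tsum_sum_overlappingCovers_le φ ψ hφ hψ x, hφcard, hψcard]
    _ = ENNReal.ofReal (4 * (κ * C) * N * M) := by
        rw [ENNReal.ofReal_mul (by positivity : (0 : ℝ) ≤ 4 * (κ * C) * N),
          ENNReal.ofReal_mul (by positivity : (0 : ℝ) ≤ 4 * (κ * C)),
          ENNReal.ofReal_mul (by norm_num : (0 : ℝ) ≤ 4), ENNReal.ofReal_ofNat]
        ring

/-- Proposition 2.10 of the paper: if `|||Φ|||_{b'} ≤ N` and `|||Ψ|||_{b,Z} ≤ M`, then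
`|||δ^Φ(Ψ)|||_{b'',Z} ≤ C_δ N M` for a constant `C_δ` depending only on
`b, b', b'', p, d, κ`. -/
theorem delta_interaction_norm_bound (p b b' b'' : ℝ) (hp0 : 0 < p) (hp1 : p < 1)
    (hb : 0 < b) (hb' : 0 < b') (hb''0 : 0 < b'') (hb'' : b'' < min b b')
    (κ : ℝ) (hκ : 0 < κ) (d : ℕ) (hd : 1 ≤ d) :
    ∃ C : ℝ, 0 < C ∧
      ∀ (Γ : Type) [Countable Γ], ∀ (dist : Γ → Γ → ℕ),
        (∀ x y : Γ, dist x y = 0 ↔ x = y) →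
        (∀ x y : Γ, dist x y = dist y x) →
        (∀ x y z : Γ, dist x z ≤ dist x y + dist y z) →
        (∀ (x : Γ) (r : ℕ), {y : Γ | dist x y = r}.Finite ∧
          ({y : Γ | dist x y = r}.ncard : ℝ) ≤ κ * (1 + (r : ℝ)) ^ (d - 1)) →
        ∀ (Z : Set Γ), Z.Nonempty →
        ∀ (A : Type) [NormedRing A] [NormedAlgebra ℂ A] [CompleteSpace A],
        ∀ (Φ Ψ : Finset Γ → A) (N M : ℝ),
          Φ ∅ = 0 → Ψ ∅ = 0 → 0 ≤ N → 0 ≤ M →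
          (∀ x : Γ,
            Summable (fun Y : {Y : Finset Γ // x ∈ Y} =>
              ‖Φ Y.1‖ * Real.exp (b' * (finsetDiam dist Y.1 : ℝ) ^ p)) ∧
            ∑' Y : {Y : Finset Γ // x ∈ Y},
              ‖Φ Y.1‖ * Real.exp (b' * (finsetDiam dist Y.1 : ℝ) ^ p) ≤ N) →
          (∀ x : Γ,
            Summable (fun Y' : {Y' : Finset Γ // x ∈ Y'} =>
              ‖Ψ Y'.1‖ * Real.exp (b * (DZ dist Z Y'.1 : ℝ) ^ p)) ∧
            ∑' Y' : {Y' : Finset Γ // x ∈ Y'},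
              ‖Ψ Y'.1‖ * Real.exp (b * (DZ dist Z Y'.1 : ℝ) ^ p) ≤ M) →
          ∀ x : Γ,
            Summable (fun X : {X : Finset Γ // x ∈ X} =>
              ‖deltaInteraction Φ Ψ X.1‖ * Real.exp (b'' * (DZ dist Z X.1 : ℝ) ^ p)) ∧
            ∑' X : {X : Finset Γ // x ∈ X},
              ‖deltaInteraction Φ Ψ X.1‖ * Real.exp (b'' * (DZ dist Z X.1 : ℝ) ^ p) ≤
                C * N * M :=
  delta_interaction_norm_bound_general p b b' b'' hp0 hp1 hb''0 hb'' κ hκ d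
end

section
/- (Core estimate of Proposition 2.8 of the paper.) Let Γ be a countable type with a graph distance 𝐝 : Γ → Γ → ℕ and constants κ > 0, d ≥ 1 such that every sphere {y : 𝐝(x,y) = r} has at most κ·(1+r)^{d−1} elements (so all balls, and hence all fattenings Y^{(n)} = {x ∈ Γ : 𝐝(x,Y) ≤ n} of nonempty finite sets Y, are finite). Let Z ⊆ Γ be nonempty, 0 < p < 1, b > 0, b̃ > 0, and 0 < b'' < min(b, 2^{−p}·b̃). Let ψ be a map from nonempty finite subsets of Γ to [0,∞) such that for every y ∈ Γ the family (ψ(Y)·exp(b·D_Z(Y)^p))_{Y ∋ y} is summable with sum at most M. Then there exists a constant C, depending only on b, b̃, b'', p, d and κ, such that for every x ∈ Γ the family indexed by pairs (n, Y) of a natural number n and a nonempty finite Y ⊆ Γ with x ∈ Y^{(n)}, with value ψ(Y)·|Y^{(n)}|·exp(−b̃·n^p)·exp(b''·D_Z(Y^{(n)})^p), is summable with sum at most C·M. -/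
/-- The `n`-fattening `S^{(n)} = {x : 𝐝(x,S) ≤ n}` of a set `S ⊆ Γ`. -/
def fatten {Γ : Type*} (dist : Γ → Γ → ℕ) (S : Set Γ) (n : ℕ) : Set Γ :=
  {x : Γ | ∃ y ∈ S, dist x y ≤ n}

/-- The diameter `D(S) = max {𝐝(a,b) : a, b ∈ S}` of a set `S ⊆ Γ`. -/
noncomputable def setDiam {Γ : Type*} (dist : Γ → Γ → ℕ) (S : Set Γ) : ℕ :=
  sSup {n : ℕ | ∃ a ∈ S, ∃ b ∈ S, dist a b = n}

/-- The distance `𝐝(S,Z) = min {𝐝(a,z) : a ∈ S, z ∈ Z}` between two sets. -/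
noncomputable def setDistToSet {Γ : Type*} (dist : Γ → Γ → ℕ) (S Z : Set Γ) : ℕ :=
  sInf {n : ℕ | ∃ a ∈ S, ∃ z ∈ Z, dist a z = n}

/-- `D_Z(S) = D(S) + 𝐝(S,Z)`. -/
noncomputable def setDZ {Γ : Type*} (dist : Γ → Γ → ℕ) (Z S : Set Γ) : ℕ :=
  setDiam dist S + setDistToSet dist S Z

/-!
Send an admissible pair `(n, Y)` to a triple `(n, y, Y)` with `y ∈ Y` and `𝐝(x, y) ≤ n`; this is
injective. Since `D_Z(Y^{(n)}) ≤ D_Z(Y) + 2n` and `t ↦ t^p` is subadditive,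
`exp (b'' D_Z(Y^{(n)})^p) ≤ exp (b'' D_Z(Y)^p) exp (2^p b'' n^p)`, while
`|Y^{(n)}| ≤ |Y| |B_n| ≲ (1 + D(Y))^d (1 + n)^d`. The first polynomial factor is absorbed by
`exp (-(b - b'') D_Z(Y)^p)`, the second by `exp (-(b̃ - 2^p b'') n^p)`. Summing over `Y ∋ y` gives
at most `M`, summing over the `≲ (1 + n)^d` points `y` of the ball and then over `n` converges.
-/

open Real Filter Topology

theorem tendsto_rpow_mul_exp_neg_mul_rpow_atTop_nhds_zero {p c : ℝ} (hp : 0 < p) (hc : 0 < c)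
    (s : ℝ) : Tendsto (fun x : ℝ => x ^ s * exp (-c * x ^ p)) atTop (𝓝 0) := by
  refine ((tendsto_rpow_mul_exp_neg_mul_atTop_nhds_zero (s / p) c hc).comp
    (tendsto_rpow_atTop hp)).congr' ?_
  filter_upwards [eventually_ge_atTop 0] with x hx
  simp only [Function.comp_apply, ← rpow_mul hx, mul_div_cancel₀ s hp.ne']

theorem tendsto_one_add_pow_mul_exp_neg_mul_rpow_atTop_nhds_zero {p c : ℝ} (hp : 0 < p)
    (hc : 0 < c) (k : ℕ) :
    Tendsto (fun n : ℕ => (1 + n : ℝ) ^ k * exp (-c * (n : ℝ) ^ p)) atTop (𝓝 0) := by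
  have hlim := ((tendsto_rpow_mul_exp_neg_mul_rpow_atTop_nhds_zero hp hc k).comp
    tendsto_natCast_atTop_atTop).const_mul (2 ^ k)
  rw [mul_zero] at hlim
  refine tendsto_of_tendsto_of_tendsto_of_le_of_le' tendsto_const_nhds hlim
    (Eventually.of_forall fun n => by positivity) ?_
  filter_upwards [eventually_ge_atTop 1] with n hn
  have h1n : (1 + n : ℝ) ≤ 2 * n := by
    have : (1 : ℝ) ≤ n := by exact_mod_cast hn
    linarith
  simp only [Function.comp_apply, rpow_natCast, ← mul_assoc, ← mul_pow]
  gcongr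

theorem summable_one_add_pow_mul_exp_neg_mul_rpow {p c : ℝ} (hp : 0 < p) (hc : 0 < c) (k : ℕ) :
    Summable (fun n : ℕ => (1 + n : ℝ) ^ k * exp (-c * (n : ℝ) ^ p)) := by
  have hinv : Summable fun n : ℕ => ‖((1 + n : ℝ) ^ 2)⁻¹‖ := by
    simpa [add_comm] using (summable_nat_add_iff 1).2
      (Real.summable_one_div_nat_pow.2 one_lt_two)
  have hlim := tendsto_one_add_pow_mul_exp_neg_mul_rpow_atTop_nhds_zero hp hc (k + 2)
  rw [← Nat.cofinite_eq_atTop] at hlim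
  refine (hinv.mul_tendsto_const hlim).congr fun n => ?_
  have : (1 + n : ℝ) ^ 2 ≠ 0 := by positivity
  field_simp
  ring

theorem summable_and_tsum_le_of_le_comp_injective {ι ι' : Type*} {f : ι → ℝ} {g : ι' → ℝ}
    {i : ι → ι'} (hi : i.Injective) (hf : ∀ a, 0 ≤ f a) (hg : ∀ b, 0 ≤ g b)
    (hfg : ∀ a, f a ≤ g (i a)) (hgs : Summable g) : Summable f ∧ ∑' a, f a ≤ ∑' b, g b := by
  have hfs : Summable f := (hgs.comp_injective hi).of_nonneg_of_le hf hfg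
  exact ⟨hfs, hfs.tsum_le_tsum_of_inj i hi (fun b _ => hg b) hfg hgs⟩

theorem summable_sigma_mul_and_tsum_le {α : Type*} {T : α → Type*} {s : ℕ → Set α}
    (hs : ∀ n, (s n).Finite) {h : (a : α) → T a → ℝ} (h0 : ∀ a t, 0 ≤ h a t) {M : ℝ}
    (hM0 : 0 ≤ M) (hM : ∀ a, Summable (h a) ∧ ∑' t, h a t ≤ M) {A B : ℕ → ℝ}
    (hA : ∀ n, 0 ≤ A n) (hB : ∀ n, ((s n).ncard : ℝ) ≤ B n) (hBA : Summable fun n => B n * A n) :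
    Summable (fun t : Σ n, Σ a : s n, T a => A t.1 * h t.2.1 t.2.2) ∧
      ∑' t : Σ n, Σ a : s n, T a, A t.1 * h t.2.1 t.2.2 ≤ (∑' n, B n * A n) * M := by
  have h0' : ∀ n (t : Σ a : s n, T a), 0 ≤ A n * h t.1 t.2 := fun n t => mul_nonneg (hA n) (h0 _ _)
  have hfiber : ∀ n, Summable (fun t : Σ a : s n, T a => A n * h t.1 t.2) ∧
      ∑' t : Σ a : s n, T a, A n * h t.1 t.2 ≤ B n * A n * M := by
    intro n
    have := (hs n).to_subtype
    have hsum : Summable (fun t : Σ a : s n, T a => A n * h t.1 t.2) :=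
      (summable_sigma_of_nonneg (h0' n)).2 ⟨fun a => (hM a).1.mul_left _, .of_finite⟩
    refine ⟨hsum, ?_⟩
    calc ∑' t : Σ a : s n, T a, A n * h t.1 t.2 = ∑' a : s n, A n * ∑' t, h a t := by
          rw [hsum.tsum_sigma]
          simp only [tsum_mul_left]
      _ ≤ ∑' _a : s n, A n * M :=
          Summable.tsum_le_tsum (fun a => mul_le_mul_of_nonneg_left (hM a).2 (hA n))
            .of_finite .of_finite
      _ = (s n).ncard * (A n * M) := by rw [tsum_const, nsmul_eq_mul, Nat.card_coe_set_eq]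
      _ ≤ B n * A n * M := by
          rw [← mul_assoc]
          exact mul_le_mul_of_nonneg_right (mul_le_mul_of_nonneg_right (hB n) (hA n)) hM0
  have hsum : Summable (fun t : Σ n, Σ a : s n, T a => A t.1 * h t.2.1 t.2.2) := by
    refine (summable_sigma_of_nonneg fun t : Σ n, Σ a : s n, T a => h0' t.1 t.2).2
      ⟨fun n => (hfiber n).1, ?_⟩
    exact (hBA.mul_right M).of_nonneg_of_le (fun n => tsum_nonneg (h0' n)) fun n => (hfiber n).2
  refine ⟨hsum, ?_⟩
  rw [hsum.tsum_sigma, ← tsum_mul_right]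
  exact Summable.tsum_le_tsum (fun n => (hfiber n).2)
    ((summable_sigma_of_nonneg fun t : Σ n, Σ a : s n, T a => h0' t.1 t.2).1 hsum).2
    (hBA.mul_right M)

theorem sub_rpow_mul_pos_of_lt_rpow_neg_mul {a p b c : ℝ} (ha : 0 < a)
    (h : b < a ^ (-p) * c) : 0 < c - a ^ p * b := by
  have := mul_lt_mul_of_pos_left h (rpow_pos_of_pos ha p)
  rwa [← mul_assoc, ← rpow_add ha, add_neg_cancel, rpow_zero, one_mul, ← sub_pos] at this

theorem stretched_exp_term_le {p b b'' bt κ C₁ ψ N D m n : ℝ} {k : ℕ} (hp0 : 0 ≤ p)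
    (hp1 : p ≤ 1) (hb'' : 0 ≤ b'') (hψ : 0 ≤ ψ) (hκ : 0 ≤ κ) (hm : 0 ≤ m) (hn : 0 ≤ n)
    (hD0 : 0 ≤ D) (hN : N ≤ κ * (1 + m) ^ (k + 1) * (κ * (1 + n) ^ (k + 1)))
    (hD : D ≤ m + 2 * n) (hC₁ : (1 + m) ^ (k + 1) * exp (-(b - b'') * m ^ p) ≤ C₁) :
    ψ * N * exp (-bt * n ^ p) * exp (b'' * D ^ p) ≤
      κ * C₁ * (κ * (1 + n) ^ (k + 1) * exp (-(bt - 2 ^ p * b'') * n ^ p)) *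
        (ψ * exp (b * m ^ p)) := by
  have hDp : D ^ p ≤ m ^ p + 2 ^ p * n ^ p :=
    calc D ^ p ≤ (m + 2 * n) ^ p := rpow_le_rpow hD0 hD hp0
      _ ≤ m ^ p + (2 * n) ^ p := rpow_add_le_add_rpow hm (by positivity) hp0 hp1
      _ = m ^ p + 2 ^ p * n ^ p := by rw [mul_rpow zero_le_two hn]
  calc ψ * N * exp (-bt * n ^ p) * exp (b'' * D ^ p)
      ≤ ψ * (κ * (1 + m) ^ (k + 1) * (κ * (1 + n) ^ (k + 1))) * exp (-bt * n ^ p) *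
          exp (b'' * (m ^ p + 2 ^ p * n ^ p)) := by gcongr
    _ = κ * ((1 + m) ^ (k + 1) * exp (-(b - b'') * m ^ p)) *
          (κ * (1 + n) ^ (k + 1) * exp (-(bt - 2 ^ p * b'') * n ^ p)) *
          (ψ * exp (b * m ^ p)) := by
        have : exp (-bt * n ^ p) * exp (b'' * (m ^ p + 2 ^ p * n ^ p)) =
            exp (-(b - b'') * m ^ p) * exp (-(bt - 2 ^ p * b'') * n ^ p) * exp (b * m ^ p) := by
          simp only [← exp_add]
          ring_nf
        linear_combination (ψ * (κ * (1 + m) ^ (k + 1) * (κ * (1 + n) ^ (k + 1)))) * this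
    _ ≤ κ * C₁ * (κ * (1 + n) ^ (k + 1) * exp (-(bt - 2 ^ p * b'') * n ^ p)) *
          (ψ * exp (b * m ^ p)) := by gcongr

section Fattening

variable {Γ : Type*} {dist : Γ → Γ → ℕ}

theorem ball_eq_biUnion_sphere (x : Γ) (n : ℕ) :
    {y | dist x y ≤ n} = ⋃ r ∈ Finset.range (n + 1), {y | dist x y = r} := by
  ext y
  simp

theorem finite_ball {x : Γ} (hsphere : ∀ r, {y | dist x y = r}.Finite) (n : ℕ) :
    {y | dist x y ≤ n}.Finite := by
  rw [ball_eq_biUnion_sphere]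
  exact (Finset.range (n + 1)).finite_toSet.biUnion fun r _ => hsphere r

theorem ncard_ball_le {κ : ℝ} {k : ℕ} (hκ : 0 ≤ κ) {x : Γ}
    (hsphere : ∀ r : ℕ, ({y | dist x y = r}.ncard : ℝ) ≤ κ * (1 + r) ^ k) (n : ℕ) :
    ({y | dist x y ≤ n}.ncard : ℝ) ≤ κ * (1 + n) ^ (k + 1) := by
  calc ({y | dist x y ≤ n}.ncard : ℝ)
      ≤ ∑ r ∈ Finset.range (n + 1), ({y | dist x y = r}.ncard : ℝ) := by
        rw [ball_eq_biUnion_sphere]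
        exact_mod_cast Finset.set_ncard_biUnion_le _ _
    _ ≤ ∑ _r ∈ Finset.range (n + 1), κ * (1 + n) ^ k := by
        gcongr with r hr
        refine (hsphere r).trans ?_
        have : (r : ℝ) ≤ n := by exact_mod_cast Nat.lt_succ_iff.1 (Finset.mem_range.1 hr)
        gcongr
    _ = κ * (1 + n) ^ (k + 1) := by
        rw [Finset.sum_const, Finset.card_range, nsmul_eq_mul]
        push_cast
        ring

theorem subset_fatten (hrefl : ∀ y, dist y y = 0) (S : Set Γ) (n : ℕ) : S ⊆ fatten dist S n :=
  fun y hy => ⟨y, hy, by simp [hrefl]⟩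

theorem fatten_subset_biUnion_ball (hsymm : ∀ x y, dist x y = dist y x) (S : Set Γ) (n : ℕ) :
    fatten dist S n ⊆ ⋃ y ∈ S, {z | dist y z ≤ n} := by
  rintro z ⟨y, hy, hzy⟩
  exact Set.mem_biUnion hy (by rwa [Set.mem_ofPred_eq, hsymm])

theorem ncard_fatten_le {κ : ℝ} {k : ℕ} (hκ : 0 ≤ κ) (hsymm : ∀ x y, dist x y = dist y x)
    (hsphere : ∀ x r, {y | dist x y = r}.Finite ∧ ({y | dist x y = r}.ncard : ℝ) ≤ κ * (1 + r) ^ k)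
    (Y : Finset Γ) (n : ℕ) :
    ((fatten dist Y n).ncard : ℝ) ≤ Y.card * (κ * (1 + n) ^ (k + 1)) := by
  have hfin : (⋃ y ∈ Y, {z | dist y z ≤ n}).Finite :=
    Y.finite_toSet.biUnion fun y _ => finite_ball (fun r => (hsphere y r).1) n
  calc ((fatten dist Y n).ncard : ℝ) ≤ ((⋃ y ∈ Y, {z | dist y z ≤ n}).ncard : ℝ) := by
        exact_mod_cast Set.ncard_le_ncard (fatten_subset_biUnion_ball hsymm _ n) hfin
    _ ≤ ∑ y ∈ Y, ({z | dist y z ≤ n}.ncard : ℝ) := by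
        exact_mod_cast Finset.set_ncard_biUnion_le _ _
    _ ≤ ∑ _y ∈ Y, κ * (1 + n) ^ (k + 1) :=
        Finset.sum_le_sum fun y _ => ncard_ball_le hκ (fun r => (hsphere y r).2) n
    _ = Y.card * (κ * (1 + n) ^ (k + 1)) := by rw [Finset.sum_const, nsmul_eq_mul]

theorem dist_le_setDiam {S : Set Γ} (hS : S.Finite) {a b : Γ} (ha : a ∈ S) (hb : b ∈ S) :
    dist a b ≤ setDiam dist S := by
  refine le_csSup ?_ ⟨a, ha, b, hb, rfl⟩
  refine ((hS.prod hS).image fun q => dist q.1 q.2).bddAbove.mono ?_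
  rintro _ ⟨u, hu, v, hv, rfl⟩
  exact ⟨(u, v), ⟨hu, hv⟩, rfl⟩

theorem card_le_of_setDiam {κ : ℝ} {k : ℕ} (hκ : 0 ≤ κ)
    (hsphere : ∀ x r, {y | dist x y = r}.Finite ∧ ({y | dist x y = r}.ncard : ℝ) ≤ κ * (1 + r) ^ k)
    {Y : Finset Γ} (hY : Y.Nonempty) :
    (Y.card : ℝ) ≤ κ * (1 + setDiam dist (Y : Set Γ)) ^ (k + 1) := by
  obtain ⟨y₀, hy₀⟩ := hY
  have hsub : (Y : Set Γ) ⊆ {y | dist y₀ y ≤ setDiam dist (Y : Set Γ)} :=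
    fun y hy => dist_le_setDiam Y.finite_toSet hy₀ hy
  rw [← Set.ncard_coe_finset]
  exact (Nat.cast_le.2 (Set.ncard_le_ncard hsub (finite_ball (fun r => (hsphere y₀ r).1) _))).trans
    (ncard_ball_le hκ (fun r => (hsphere y₀ r).2) _)

theorem setDiam_fatten_le (hsymm : ∀ x y, dist x y = dist y x)
    (htri : ∀ x y z, dist x z ≤ dist x y + dist y z) {S : Set Γ} (hS : S.Finite) (n : ℕ) :
    setDiam dist (fatten dist S n) ≤ setDiam dist S + 2 * n := by
  refine csSup_le' ?_
  rintro _ ⟨a, ⟨ya, hya, haya⟩, b, ⟨yb, hyb, hbyb⟩, rfl⟩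
  have h1 := htri a ya b
  have h2 := htri ya yb b
  have h3 := dist_le_setDiam (dist := dist) hS hya hyb
  rw [hsymm] at hbyb
  omega

theorem setDistToSet_fatten_le (hrefl : ∀ y, dist y y = 0) {S Z : Set Γ} (hS : S.Nonempty)
    (hZ : Z.Nonempty) (n : ℕ) :
    setDistToSet dist (fatten dist S n) Z ≤ setDistToSet dist S Z := by
  obtain ⟨y, hy⟩ := hS
  obtain ⟨z, hz⟩ := hZ
  refine csInf_le_csInf' ⟨_, y, hy, z, hz, rfl⟩ ?_
  rintro _ ⟨a, ha, z', hz', rfl⟩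
  exact ⟨a, subset_fatten hrefl S n ha, z', hz', rfl⟩

theorem setDZ_fatten_le (hrefl : ∀ y, dist y y = 0) (hsymm : ∀ x y, dist x y = dist y x)
    (htri : ∀ x y z, dist x z ≤ dist x y + dist y z) {S Z : Set Γ} (hS : S.Finite)
    (hS' : S.Nonempty) (hZ : Z.Nonempty) (n : ℕ) :
    setDZ dist Z (fatten dist S n) ≤ setDZ dist Z S + 2 * n := by
  have := setDiam_fatten_le hsymm htri hS n
  have := setDistToSet_fatten_le hrefl hS' hZ n
  unfold setDZ
  omega

theorem fattening_term_le {p b b'' bt κ C₁ ψ : ℝ} {k : ℕ} (hp0 : 0 ≤ p) (hp1 : p ≤ 1)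
    (hb'' : 0 ≤ b'') (hψ : 0 ≤ ψ) (hκ : 0 ≤ κ) (hrefl : ∀ y, dist y y = 0)
    (hsymm : ∀ x y, dist x y = dist y x) (htri : ∀ x y z, dist x z ≤ dist x y + dist y z)
    (hsphere : ∀ x r, {y | dist x y = r}.Finite ∧ ({y | dist x y = r}.ncard : ℝ) ≤ κ * (1 + r) ^ k)
    (hC₁ : ∀ m : ℕ, (1 + m : ℝ) ^ (k + 1) * exp (-(b - b'') * (m : ℝ) ^ p) ≤ C₁)
    {Z : Set Γ} (hZ : Z.Nonempty) {Y : Finset Γ} (hY : Y.Nonempty) (n : ℕ) :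
    ψ * (fatten dist Y n).ncard * exp (-bt * (n : ℝ) ^ p) *
        exp (b'' * (setDZ dist Z (fatten dist Y n) : ℝ) ^ p) ≤
      κ * C₁ * (κ * (1 + n) ^ (k + 1) * exp (-(bt - 2 ^ p * b'') * (n : ℝ) ^ p)) *
        (ψ * exp (b * (setDZ dist Z Y : ℝ) ^ p)) := by
  have hdiam : (setDiam dist (Y : Set Γ) : ℝ) ≤ setDZ dist Z Y := by
    exact_mod_cast Nat.le_add_right _ _
  have hcard : ((fatten dist Y n).ncard : ℝ) ≤
      κ * (1 + (setDZ dist Z Y : ℝ)) ^ (k + 1) * (κ * (1 + n) ^ (k + 1)) :=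
    (ncard_fatten_le hκ hsymm hsphere Y n).trans <| by
      gcongr
      exact (card_le_of_setDiam hκ hsphere hY).trans (by gcongr)
  have hDZ : (setDZ dist Z (fatten dist Y n) : ℝ) ≤ setDZ dist Z Y + 2 * n := by
    exact_mod_cast setDZ_fatten_le hrefl hsymm htri Y.finite_toSet hY hZ n
  exact stretched_exp_term_le hp0 hp1 hb'' hψ hκ (Nat.cast_nonneg _) (Nat.cast_nonneg _)
    (Nat.cast_nonneg _) hcard hDZ (hC₁ _)

theorem summable_subtype_mem_fatten_and_tsum_le {x : Γ}
    {F : {q : ℕ × Finset Γ // q.2.Nonempty ∧ x ∈ fatten dist q.2 q.1} → ℝ}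
    {G : ℕ → Finset Γ → ℝ} (hF : ∀ q, 0 ≤ F q) (hG : ∀ n Y, 0 ≤ G n Y)
    (hFG : ∀ q, F q ≤ G q.1.1 q.1.2)
    (hGs : Summable fun t : Σ n, Σ a : {y | dist x y ≤ n}, {Y : Finset Γ // ↑a ∈ Y} =>
      G t.1 t.2.2.1) :
    Summable F ∧ ∑' q, F q ≤
      ∑' t : Σ n, Σ a : {y | dist x y ≤ n}, {Y : Finset Γ // ↑a ∈ Y}, G t.1 t.2.2.1 := by
  choose y hyY hxy using fun q : {q : ℕ × Finset Γ // q.2.Nonempty ∧ x ∈ fatten dist q.2 q.1} =>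
    q.2.2
  refine summable_and_tsum_le_of_le_comp_injective
    (i := fun q => ⟨q.1.1, ⟨y q, hxy q⟩, ⟨q.1.2, hyY q⟩⟩) ?_ hF (fun t => hG _ _) hFG hGs
  intro q q' h
  exact Subtype.ext (Prod.ext (congrArg Sigma.fst h) (congrArg (fun t => t.2.2.1) h))

end Fattening

theorem fattening_weighted_sum_bound_general (p b bt b'' : ℝ) (hp0 : 0 < p) (hp1 : p < 1)
    (hb''0 : 0 < b'')
    (hb'' : b'' < min b ((2 : ℝ) ^ (-p) * bt))
    (κ : ℝ) (hκ : 0 < κ) (d : ℕ) :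
    ∃ C : ℝ, 0 < C ∧
      ∀ (Γ : Type) [Countable Γ], ∀ (dist : Γ → Γ → ℕ),
        (∀ x y : Γ, dist x y = 0 ↔ x = y) →
        (∀ x y : Γ, dist x y = dist y x) →
        (∀ x y z : Γ, dist x z ≤ dist x y + dist y z) →
        (∀ (x : Γ) (r : ℕ), {y : Γ | dist x y = r}.Finite ∧
          ({y : Γ | dist x y = r}.ncard : ℝ) ≤ κ * (1 + (r : ℝ)) ^ (d - 1)) →
        ∀ (Z : Set Γ), Z.Nonempty →
        ∀ (ψ : Finset Γ → ℝ), (∀ Y : Finset Γ, 0 ≤ ψ Y) →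
        ∀ M : ℝ,
          (∀ y : Γ,
            Summable (fun Y : {Y : Finset Γ // y ∈ Y} =>
              ψ Y.1 * Real.exp (b * (setDZ dist Z (↑Y.1) : ℝ) ^ p)) ∧
            ∑' Y : {Y : Finset Γ // y ∈ Y},
              ψ Y.1 * Real.exp (b * (setDZ dist Z (↑Y.1) : ℝ) ^ p) ≤ M) →
          ∀ x : Γ,
            Summable (fun q : {q : ℕ × Finset Γ // q.2.Nonempty ∧ x ∈ fatten dist (↑q.2) q.1} =>
              ψ q.1.2 * ((fatten dist (↑q.1.2) q.1.1).ncard : ℝ) *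
                Real.exp (-bt * (q.1.1 : ℝ) ^ p) *
                Real.exp (b'' * (setDZ dist Z (fatten dist (↑q.1.2) q.1.1) : ℝ) ^ p)) ∧
            ∑' q : {q : ℕ × Finset Γ // q.2.Nonempty ∧ x ∈ fatten dist (↑q.2) q.1},
              ψ q.1.2 * ((fatten dist (↑q.1.2) q.1.1).ncard : ℝ) *
                Real.exp (-bt * (q.1.1 : ℝ) ^ p) *
                Real.exp (b'' * (setDZ dist Z (fatten dist (↑q.1.2) q.1.1) : ℝ) ^ p) ≤
              C * M := by
  have hc₁ : 0 < b - b'' := sub_pos.2 (hb''.trans_le (min_le_left _ _))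
  have hc₂ := sub_rpow_mul_pos_of_lt_rpow_neg_mul two_pos (hb''.trans_le (min_le_right _ _))
  have hsum₁ := summable_one_add_pow_mul_exp_neg_mul_rpow hp0 hc₁ (d - 1 + 1)
  set C₁ := ∑' m : ℕ, (1 + m : ℝ) ^ (d - 1 + 1) * exp (-(b - b'') * (m : ℝ) ^ p)
  set B : ℕ → ℝ := fun n => κ * (1 + n) ^ (d - 1 + 1)
  set A : ℕ → ℝ := fun n => κ * C₁ * (B n * exp (-(bt - 2 ^ p * b'') * (n : ℝ) ^ p))
  have hBA : Summable fun n => B n * A n :=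
    ((summable_one_add_pow_mul_exp_neg_mul_rpow hp0 hc₂ ((d - 1 + 1) * 2)).mul_left
      (κ ^ 3 * C₁)).congr fun n => by simp only [A, B]; ring
  have hC₁ : 0 < C₁ := hsum₁.tsum_pos (fun _ => by positivity) 0 (by positivity)
  refine ⟨∑' n, B n * A n, hBA.tsum_pos (fun _ => by positivity) 0 (by positivity), ?_⟩
  intro Γ _ dist hzero hsymm htri hsphere Z hZ ψ hψ M hM x
  have hh0 : ∀ Y, 0 ≤ ψ Y * exp (b * (setDZ dist Z Y : ℝ) ^ p) :=
    fun Y => mul_nonneg (hψ Y) (exp_nonneg _)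
  obtain ⟨hsum, htsum⟩ := summable_sigma_mul_and_tsum_le
    (fun n => finite_ball (fun r => (hsphere x r).1) n) (fun _ _ => hh0 _)
    ((tsum_nonneg fun _ => hh0 _).trans (hM x).2) hM (fun n => by positivity)
    (ncard_ball_le hκ.le (fun r => (hsphere x r).2)) hBA
  refine (summable_subtype_mem_fatten_and_tsum_le
    (G := fun n Y => A n * (ψ Y * exp (b * (setDZ dist Z Y : ℝ) ^ p))) (fun q => ?_)
    (fun n Y => mul_nonneg (by positivity) (hh0 Y)) (fun q => ?_) hsum).imp_right (·.trans htsum)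
  · have := hψ q.1.2
    positivity
  · exact fattening_term_le hp0.le hp1.le hb''0.le (hψ _) hκ.le (fun y => (hzero y y).2 rfl) hsymm
      htri hsphere (fun m => hsum₁.le_tsum m fun _ _ => by positivity) hZ q.2.1 q.1.1

/-- The core estimate in the proof of Proposition 2.8 of the paper: if the nonnegative weights
`ψ(Y)` satisfy `∑_{Y ∋ y} ψ(Y) exp (b D_Z(Y)^p) ≤ M` for all `y`, then the double family
`(n, Y) ↦ ψ(Y) |Y^{(n)}| exp (-b̃ n^p) exp (b'' D_Z(Y^{(n)})^p)`, indexed by pairs with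
`x ∈ Y^{(n)}`, is summable with sum at most `C M`, where `C` depends only on
`b, b̃, b'', p, d, κ`. -/
theorem fattening_weighted_sum_bound (p b bt b'' : ℝ) (hp0 : 0 < p) (hp1 : p < 1)
    (hb : 0 < b) (hbt : 0 < bt) (hb''0 : 0 < b'')
    (hb'' : b'' < min b ((2 : ℝ) ^ (-p) * bt))
    (κ : ℝ) (hκ : 0 < κ) (d : ℕ) (hd : 1 ≤ d) :
    ∃ C : ℝ, 0 < C ∧
      ∀ (Γ : Type) [Countable Γ], ∀ (dist : Γ → Γ → ℕ),
        (∀ x y : Γ, dist x y = 0 ↔ x = y) →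
        (∀ x y : Γ, dist x y = dist y x) →
        (∀ x y z : Γ, dist x z ≤ dist x y + dist y z) →
        (∀ (x : Γ) (r : ℕ), {y : Γ | dist x y = r}.Finite ∧
          ({y : Γ | dist x y = r}.ncard : ℝ) ≤ κ * (1 + (r : ℝ)) ^ (d - 1)) →
        ∀ (Z : Set Γ), Z.Nonempty →
        ∀ (ψ : Finset Γ → ℝ), (∀ Y : Finset Γ, 0 ≤ ψ Y) →
        ∀ M : ℝ,
          (∀ y : Γ,
            Summable (fun Y : {Y : Finset Γ // y ∈ Y} =>
              ψ Y.1 * Real.exp (b * (setDZ dist Z (↑Y.1) : ℝ) ^ p)) ∧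
            ∑' Y : {Y : Finset Γ // y ∈ Y},
              ψ Y.1 * Real.exp (b * (setDZ dist Z (↑Y.1) : ℝ) ^ p) ≤ M) →
          ∀ x : Γ,
            Summable (fun q : {q : ℕ × Finset Γ // q.2.Nonempty ∧ x ∈ fatten dist (↑q.2) q.1} =>
              ψ q.1.2 * ((fatten dist (↑q.1.2) q.1.1).ncard : ℝ) *
                Real.exp (-bt * (q.1.1 : ℝ) ^ p) *
                Real.exp (b'' * (setDZ dist Z (fatten dist (↑q.1.2) q.1.1) : ℝ) ^ p)) ∧
            ∑' q : {q : ℕ × Finset Γ // q.2.Nonempty ∧ x ∈ fatten dist (↑q.2) q.1},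
              ψ q.1.2 * ((fatten dist (↑q.1.2) q.1.1).ncard : ℝ) *
                Real.exp (-bt * (q.1.1 : ℝ) ^ p) *
                Real.exp (b'' * (setDZ dist Z (fatten dist (↑q.1.2) q.1.1) : ℝ) ^ p) ≤
              C * M :=
  fattening_weighted_sum_bound_general p b bt b'' hp0 hp1 hb''0 hb'' κ hκ d
end

section
/- (Section 5 truncation estimate.) Let Γ be a countable type with a graph distance 𝐝 : Γ → Γ → ℕ satisfying the metric axioms, E a normed space, 0 < p < 1, 0 < b' < b and N ≥ 0. Let Φ be a map from finite subsets of Γ to E with Φ(∅) = 0 such that for every x ∈ Γ the family (‖Φ(X)‖·exp(b·D(X)^p))_{X ∋ x, X nonempty finite} is summable with sum at most N. For R ∈ ℕ define the truncated interaction Φ_R by Φ_R(X) = Φ(X) if D(X) ≤ R and Φ_R(X) = 0 otherwise. Then for every x ∈ Γ the family (‖Φ_R(X) − Φ(X)‖·exp(b'·D(X)^p))_{X ∋ x, X nonempty finite} is summable with sum at most exp(−(b−b')·(R+1)^p)·N. -/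
/-- Section 5 truncation estimate: if `|||Φ|||_b ≤ N` and `Φ_R` is the truncation of `Φ` to
sets of diameter at most `R`, then `|||Φ_R - Φ|||_{b'} ≤ exp (-(b-b') (R+1)^p) N`. -/
theorem truncation_estimate {Γ : Type*} [Countable Γ] (dist : Γ → Γ → ℕ)
    (hdist0 : ∀ x y : Γ, dist x y = 0 ↔ x = y)
    (hsymm : ∀ x y : Γ, dist x y = dist y x)
    (htri : ∀ x y z : Γ, dist x z ≤ dist x y + dist y z)
    {E : Type*} [NormedAddCommGroup E] [NormedSpace ℝ E]
    (p b b' N : ℝ) (hp0 : 0 < p) (hp1 : p < 1) (hb' : 0 < b') (hb : b' < b) (hN : 0 ≤ N)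
    (Φ : Finset Γ → E) (hΦempty : Φ ∅ = 0)
    (hΦ : ∀ x : Γ,
      Summable (fun X : {X : Finset Γ // x ∈ X} =>
        ‖Φ X.1‖ * Real.exp (b * (finsetDiam dist X.1 : ℝ) ^ p)) ∧
      ∑' X : {X : Finset Γ // x ∈ X},
        ‖Φ X.1‖ * Real.exp (b * (finsetDiam dist X.1 : ℝ) ^ p) ≤ N)
    (R : ℕ)
    (ΦR : Finset Γ → E)
    (hΦR : ∀ X : Finset Γ, ΦR X = if finsetDiam dist X ≤ R then Φ X else 0) :
    ∀ x : Γ,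
      Summable (fun X : {X : Finset Γ // x ∈ X} =>
        ‖ΦR X.1 - Φ X.1‖ * Real.exp (b' * (finsetDiam dist X.1 : ℝ) ^ p)) ∧
      ∑' X : {X : Finset Γ // x ∈ X},
        ‖ΦR X.1 - Φ X.1‖ * Real.exp (b' * (finsetDiam dist X.1 : ℝ) ^ p) ≤
        Real.exp (-(b - b') * ((R : ℝ) + 1) ^ p) * N := by
  intro x
  set C : ℝ := Real.exp (-(b - b') * ((R : ℝ) + 1) ^ p) with hC
  obtain ⟨hsum, hle⟩ := hΦ x
  -- pointwise bound
  have key : ∀ X : {X : Finset Γ // x ∈ X},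
      ‖ΦR X.1 - Φ X.1‖ * Real.exp (b' * (finsetDiam dist X.1 : ℝ) ^ p) ≤
      C * (‖Φ X.1‖ * Real.exp (b * (finsetDiam dist X.1 : ℝ) ^ p)) := by
    intro X
    rw [hΦR]
    by_cases h : finsetDiam dist X.1 ≤ R
    · simp only [h, if_pos, sub_self, norm_zero, zero_mul]
      positivity
    · rw [if_neg h, zero_sub, norm_neg]
      rcases eq_or_ne (Φ X.1) 0 with h0 | h0
      · simp [h0]
      have hD : (R : ℝ) + 1 ≤ (finsetDiam dist X.1 : ℝ) := by
        push_cast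
        exact_mod_cast Nat.succ_le_of_lt (Nat.lt_of_not_le h)
      have hDp : ((R : ℝ) + 1) ^ p ≤ (finsetDiam dist X.1 : ℝ) ^ p :=
        Real.rpow_le_rpow (by positivity) hD hp0.le
      have hexp : Real.exp (b' * (finsetDiam dist X.1 : ℝ) ^ p) ≤
          C * Real.exp (b * (finsetDiam dist X.1 : ℝ) ^ p) := by
        rw [hC, ← Real.exp_add]
        apply Real.exp_le_exp.2
        nlinarith [hb.le]
      calc ‖Φ X.1‖ * Real.exp (b' * (finsetDiam dist X.1 : ℝ) ^ p)
          ≤ ‖Φ X.1‖ * (C * Real.exp (b * (finsetDiam dist X.1 : ℝ) ^ p)) :=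
            mul_le_mul_of_nonneg_left hexp (norm_nonneg _)
        _ = C * (‖Φ X.1‖ * Real.exp (b * (finsetDiam dist X.1 : ℝ) ^ p)) := by ring
  have hsum' : Summable (fun X : {X : Finset Γ // x ∈ X} =>
      ‖ΦR X.1 - Φ X.1‖ * Real.exp (b' * (finsetDiam dist X.1 : ℝ) ^ p)) := by
    apply Summable.of_nonneg_of_le (fun X => by positivity) key
    exact hsum.mul_left C
  refine ⟨hsum', ?_⟩
  calc ∑' X : {X : Finset Γ // x ∈ X},
        ‖ΦR X.1 - Φ X.1‖ * Real.exp (b' * (finsetDiam dist X.1 : ℝ) ^ p)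
      ≤ ∑' X : {X : Finset Γ // x ∈ X},
        C * (‖Φ X.1‖ * Real.exp (b * (finsetDiam dist X.1 : ℝ) ^ p)) :=
        Summable.tsum_le_tsum key hsum' (hsum.mul_left C)
    _ = C * ∑' X : {X : Finset Γ // x ∈ X},
        ‖Φ X.1‖ * Real.exp (b * (finsetDiam dist X.1 : ℝ) ^ p) := tsum_mul_left
    _ ≤ C * N := mul_le_mul_of_nonneg_left hle (Real.exp_pos _).le
end

section
/- (Proposition 4.1 of the paper, abstract Banach-space form.) Let E be a real Banach space, m ≥ 1 an integer, and let τ, σ : ℝ → (E →L[ℝ] E) be 2m-times continuously differentiable maps into the Banach space of bounded linear operators on E (norm topology), satisfying τ(0) = σ(0) = id, τ(−μ) ∘ τ(μ) = id and σ(−μ) ∘ σ(μ) = id for all μ ∈ ℝ (time-reversal symmetry). If the operator-valued function μ ↦ τ(μ) − σ(μ) has vanishing derivatives at μ = 0 of every order j = 0, 1, …, 2m−1, then its derivative of order 2m at μ = 0 also vanishes. -/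
/-! With `δ = τ - σ`, time-reversal symmetry gives
`δ(-μ) τ(μ) + σ(-μ) δ(μ) = τ(-μ) τ(μ) - σ(-μ) σ(μ) = 0`. Differentiating `2m` times at `0` by
Leibniz' rule, every term in which a factor `δ` is differentiated fewer than `2m` times vanishes,
leaving `(-1)^(2m) δ⁽²ᵐ⁾(0) τ(0) + σ(0) δ⁽²ᵐ⁾(0) = 2 δ⁽²ᵐ⁾(0) = 0`. -/

open Finset

section

variable {𝕜 𝔸 : Type*} [NontriviallyNormedField 𝕜] [NormedRing 𝔸] [NormedAlgebra 𝕜 𝔸]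
  {n : ℕ} {f g : 𝕜 → 𝔸} {x : 𝕜}

theorem iteratedDeriv_fun_mul_of_vanishing_left (hf : ContDiffAt 𝕜 n f x)
    (hg : ContDiffAt 𝕜 n g x) (hflat : ∀ j < n, iteratedDeriv j f x = 0) :
    iteratedDeriv n (fun y => f y * g y) x = iteratedDeriv n f x * g x := by
  rw [iteratedDeriv_fun_mul hf hg, sum_range_succ,
    sum_eq_zero fun j hj => by rw [hflat j (mem_range.mp hj)]; simp]
  simp

theorem iteratedDeriv_fun_mul_of_vanishing_right (hf : ContDiffAt 𝕜 n f x)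
    (hg : ContDiffAt 𝕜 n g x) (hflat : ∀ j < n, iteratedDeriv j g x = 0) :
    iteratedDeriv n (fun y => f y * g y) x = f x * iteratedDeriv n g x := by
  rw [iteratedDeriv_fun_mul hf hg, sum_range_succ',
    sum_eq_zero fun j hj => by rw [hflat (n - (j + 1)) (by have := mem_range.mp hj; omega)]; simp]
  simp

theorem neg_one_pow_smul_iteratedDeriv_sub_mul_add_mul_eq_zero (hf : ContDiff 𝕜 n f)
    (hg : ContDiff 𝕜 n g) (hrev : ∀ μ, f (-μ) * f μ = g (-μ) * g μ)
    (hlow : ∀ j < n, iteratedDeriv j (fun μ => f μ - g μ) 0 = 0) :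
    (-1 : 𝕜) ^ n • iteratedDeriv n (fun μ => f μ - g μ) 0 * f 0
      + g 0 * iteratedDeriv n (fun μ => f μ - g μ) 0 = 0 := by
  set δ := fun μ => f μ - g μ
  have hδ : ContDiff 𝕜 n δ := hf.sub hg
  have hδneg : ContDiff 𝕜 n fun μ => δ (-μ) := hδ.comp contDiff_neg
  have hgneg : ContDiff 𝕜 n fun μ => g (-μ) := hg.comp contDiff_neg
  have hδneg_low : ∀ j < n, iteratedDeriv j (fun μ => δ (-μ)) 0 = 0 := fun j hj => by
    rw [iteratedDeriv_comp_neg, neg_zero, hlow j hj, smul_zero]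
  have hsum : (fun μ => δ (-μ) * f μ + g (-μ) * δ μ) = 0 := funext fun μ => by
    have : δ (-μ) * f μ + g (-μ) * δ μ = f (-μ) * f μ - g (-μ) * g μ := by
      simp only [δ]; noncomm_ring
    rw [this, hrev, sub_self, Pi.zero_apply]
  calc (-1 : 𝕜) ^ n • iteratedDeriv n δ 0 * f 0 + g 0 * iteratedDeriv n δ 0
      = iteratedDeriv n (fun μ => δ (-μ) * f μ) 0
          + iteratedDeriv n (fun μ => g (-μ) * δ μ) 0 := by
        rw [iteratedDeriv_fun_mul_of_vanishing_left hδneg.contDiffAt hf.contDiffAt hδneg_low,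
          iteratedDeriv_fun_mul_of_vanishing_right hgneg.contDiffAt hδ.contDiffAt hlow,
          iteratedDeriv_comp_neg, neg_zero]
    _ = iteratedDeriv n (fun μ => δ (-μ) * f μ + g (-μ) * δ μ) 0 :=
        (iteratedDeriv_fun_add (hδneg.mul hf).contDiffAt (hgneg.mul hδ).contDiffAt).symm
    _ = 0 := by rw [hsum, iteratedDeriv_const_zero]

end

theorem time_reversal_symmetric_order_improvement_general
    {E : Type*} [NormedAddCommGroup E] [NormedSpace ℝ E]
    (m : ℕ) (τ σ : ℝ → E →L[ℝ] E)
    (hτ : ContDiff ℝ (2 * m : ℕ) τ) (hσ : ContDiff ℝ (2 * m : ℕ) σ)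
    (hτ0 : τ 0 = ContinuousLinearMap.id ℝ E)
    (hσ0 : σ 0 = ContinuousLinearMap.id ℝ E)
    (hτrev : ∀ μ : ℝ, (τ (-μ)).comp (τ μ) = ContinuousLinearMap.id ℝ E)
    (hσrev : ∀ μ : ℝ, (σ (-μ)).comp (σ μ) = ContinuousLinearMap.id ℝ E)
    (hlow : ∀ j : ℕ, j < 2 * m → iteratedDeriv j (fun μ => τ μ - σ μ) 0 = 0) :
    iteratedDeriv (2 * m) (fun μ => τ μ - σ μ) 0 = 0 := by
  have key := neg_one_pow_smul_iteratedDeriv_sub_mul_add_mul_eq_zero hτ hσ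
    (fun μ => (hτrev μ).trans (hσrev μ).symm) hlow
  rw [(even_two_mul m).neg_one_pow, one_smul, hτ0, hσ0, ← ContinuousLinearMap.one_def,
    mul_one, one_mul, ← two_smul ℝ] at key
  exact (smul_eq_zero.mp key).resolve_left two_ne_zero

/-- Proposition 4.1 of the paper (abstract Banach-space form): if `τ` and `σ` are
time-reversal symmetric `2m`-times continuously differentiable operator-valued maps with
`τ 0 = σ 0 = id`, and `τ - σ` has vanishing derivatives at `0` up to order `2m - 1`, then
also its derivative of order `2m` at `0` vanishes. -/
theorem time_reversal_symmetric_order_improvement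
    {E : Type*} [NormedAddCommGroup E] [NormedSpace ℝ E] [CompleteSpace E]
    (m : ℕ) (hm : 1 ≤ m) (τ σ : ℝ → E →L[ℝ] E)
    (hτ : ContDiff ℝ (2 * m : ℕ) τ) (hσ : ContDiff ℝ (2 * m : ℕ) σ)
    (hτ0 : τ 0 = ContinuousLinearMap.id ℝ E)
    (hσ0 : σ 0 = ContinuousLinearMap.id ℝ E)
    (hτrev : ∀ μ : ℝ, (τ (-μ)).comp (τ μ) = ContinuousLinearMap.id ℝ E)
    (hσrev : ∀ μ : ℝ, (σ (-μ)).comp (σ μ) = ContinuousLinearMap.id ℝ E)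
    (hlow : ∀ j : ℕ, j < 2 * m → iteratedDeriv j (fun μ => τ μ - σ μ) 0 = 0) :
    iteratedDeriv (2 * m) (fun μ => τ μ - σ μ) 0 = 0 :=
  time_reversal_symmetric_order_improvement_general m τ σ hτ hσ hτ0 hσ0 hτrev hσrev hlow
end

section
/- (Second-order property of the symmetric Trotter product, from the proof of Theorem 3.1, in a Banach algebra.) Let A be a complete normed unital algebra over ℝ or ℂ, let a_1, …, a_k ∈ A and a = a_1 + ⋯ + a_k. Define G : ℝ → A by G(s) = exp(s·a_1/2)·exp(s·a_2/2)···exp(s·a_k/2) · exp(s·a_k/2)···exp(s·a_2/2)·exp(s·a_1/2) − exp(s·a). Then G(0) = 0, G'(0) = 0 and G''(0) = 0, i.e. the symmetric product σ^{(1)}_s agrees with exp(s·a) to second order at s = 0. -/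
/-!
Call `f : ℝ → A` second-order exponential with exponent `x` if its derivatives of order at most
two at `0` are `1, x, x²`, as for `s ↦ exp (s • x)`. By the Leibniz rule, if `f` and `g` are
second-order exponential with exponents `x` and `y`, then so is `s ↦ f s * g s * f s`, with
exponent `2x + y`: the symmetric placement of `f` makes the cross terms `2xy + 2yx` those of
`(2x + y)²`. Peeling off the outermost pair of factors `exp ((s/2) • a₀)` then shows by induction
that the symmetric Trotter product is second-order exponential with exponent `a₁ + ⋯ + a_k`.
-/

/-- The symmetric (Trotter–Suzuki) product
`σ^{(1)}_s = exp(s a₁/2) ⋯ exp(s a_k/2) · exp(s a_k/2) ⋯ exp(s a₁/2)`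
in a complete normed unital algebra. -/
noncomputable def symTrotterProd {A : Type*} [NormedRing A] [NormedAlgebra ℝ A]
    (k : ℕ) (a : Fin k → A) (s : ℝ) : A :=
  (List.ofFn fun i => NormedSpace.exp ((s / 2) • a i)).prod *
  (List.ofFn fun i => NormedSpace.exp ((s / 2) • a i)).reverse.prod

open NormedSpace

section SecondOrder

variable {A : Type*} [NormedRing A] [NormedAlgebra ℝ A]

theorem symTrotterProd_succ {k : ℕ} (a : Fin (k + 1) → A) (s : ℝ) :
    symTrotterProd (k + 1) a s =
      exp ((s / 2) • a 0) * symTrotterProd k (Fin.tail a) s * exp ((s / 2) • a 0) := by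
  simp only [symTrotterProd, List.ofFn_succ, List.prod_cons, List.reverse_cons, List.prod_append,
    List.prod_nil, mul_one, mul_assoc]
  rfl

def IsSecondOrderExp (f : ℝ → A) (x : A) : Prop :=
  ContDiffAt ℝ 2 f 0 ∧ ∀ j ≤ 2, iteratedDeriv j f 0 = x ^ j

theorem IsSecondOrderExp.mul_mul_self {f g : ℝ → A} {x y : A}
    (hf : IsSecondOrderExp f x) (hg : IsSecondOrderExp g y) :
    IsSecondOrderExp (fun s => f s * g s * f s) (x + y + x) := by
  obtain ⟨hf, hfj⟩ := hf
  obtain ⟨hg, hgj⟩ := hg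
  refine ⟨(hf.mul hg).mul hf, fun j hj => ?_⟩
  have hfg : ∀ i ≤ 2, iteratedDeriv i (fun s => f s * g s) 0 =
      ∑ m ∈ Finset.range (i + 1), (i.choose m : A) * x ^ m * y ^ (i - m) := by
    intro i hi
    rw [iteratedDeriv_fun_mul (hf.of_le (by exact_mod_cast hi)) (hg.of_le (by exact_mod_cast hi))]
    refine Finset.sum_congr rfl fun m hm => ?_
    rw [hfj m (by simp at hm; omega), hgj (i - m) (by omega)]
  rw [iteratedDeriv_fun_mul ((hf.mul hg).of_le (by exact_mod_cast hj))
    (hf.of_le (by exact_mod_cast hj))]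
  interval_cases j
  · simp [hfg, hfj]
  · simp [Finset.sum_range_succ, hfg, hfj, add_assoc]
  · simp [Finset.sum_range_succ, hfg, hfj]
    noncomm_ring

variable [CompleteSpace A]

theorem contDiff_exp_smul (x : A) {n : WithTop ℕ∞} : ContDiff ℝ n fun s : ℝ => exp (s • x) :=
  contDiff_iff_contDiffAt.2 fun s =>
    (exp_analytic (s • x)).contDiffAt.comp s (contDiffAt_id.smul contDiffAt_const)

theorem iteratedDeriv_exp_smul (x : A) (n : ℕ) :
    iteratedDeriv n (fun s : ℝ => exp (s • x)) = fun s => x ^ n * exp (s • x) := by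
  induction n with
  | zero => simp
  | succ n ih =>
    funext s
    rw [iteratedDeriv_succ, ih, pow_succ, mul_assoc]
    exact ((hasDerivAt_exp_smul_const' x s).const_mul _).deriv

theorem isSecondOrderExp_exp_smul (x : A) : IsSecondOrderExp (fun s : ℝ => exp (s • x)) x :=
  ⟨(contDiff_exp_smul x).contDiffAt, fun j _ => by simp [iteratedDeriv_exp_smul]⟩

theorem isSecondOrderExp_symTrotterProd (k : ℕ) (a : Fin k → A) :
    IsSecondOrderExp (symTrotterProd k a) (∑ i, a i) := by
  induction k with
  | zero =>
    convert isSecondOrderExp_exp_smul (0 : A) using 1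
    · funext s
      simp [symTrotterProd]
    · simp
  | succ k ih =>
    have h := (isSecondOrderExp_exp_smul ((2⁻¹ : ℝ) • a 0)).mul_mul_self (ih (Fin.tail a))
    convert h using 1
    · funext s
      simp only [symTrotterProd_succ, smul_smul, div_eq_mul_inv]
    · rw [Fin.sum_univ_succ, add_right_comm, ← add_smul]
      norm_num [Fin.tail]

end SecondOrder

/-- From the proof of Theorem 3.1: the symmetric Trotter product
`σ^{(1)}_s = exp(s a₁/2) ⋯ exp(s a_k/2) · exp(s a_k/2) ⋯ exp(s a₁/2)` agrees with
`exp (s (a₁ + ⋯ + a_k))` to second order at `s = 0`: the function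
`G(s) = σ^{(1)}_s - exp (s (a₁ + ⋯ + a_k))` satisfies `G(0) = G'(0) = G''(0) = 0`. -/
theorem symmetric_trotter_second_order {A : Type*} [NormedRing A] [NormedAlgebra ℝ A]
    [CompleteSpace A] (k : ℕ) (a : Fin k → A) :
    ∀ j : ℕ, j ≤ 2 →
      iteratedDeriv j
        (fun s : ℝ => symTrotterProd k a s - NormedSpace.exp (s • ∑ i, a i)) 0 = 0 := by
  intro j hj
  obtain ⟨hσ, hσj⟩ := isSecondOrderExp_symTrotterProd k a
  rw [iteratedDeriv_fun_sub (hσ.of_le (by exact_mod_cast hj)) (contDiff_exp_smul _).contDiffAt,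
    hσj j hj, iteratedDeriv_exp_smul]
  simp
end
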